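/- arXiv:2406.10648 — 4 statements merged into one kernel-verified Lean document; each statement's English description precedes it below -/
import Mathlib

section
/- Let d ≥ 1 and p ∈ (0,1). Let I be a {0,1}^d-valued random vector with P(I_j = 1) = p for all j. Let μ_0, μ_1 be probability distributions on ℝ and let Z_{0,1},…,Z_{0,d},Z_{1,1},…,Z_{1,d} be mutually independent random variables, independent of I, with Z_{0,j} ∼ μ_0 and Z_{1,j} ∼ μ_1 for all j. Set S = Σ_{j=1}^d Z_{I_j,j} and, for k ∈ {0,…,d}, H_k(x) = P(Σ_{j=1}^{k} Z_{1,j} + Σ_{j=k+1}^{d} Z_{0,j} ≤ x). Then there exist nonnegative weights, indexed by the integer pairs (k_1,k_2) with 0 ≤ k_1 < dp < k_2 ≤ d and, when dp is an integer, also by the single index dp, summing to 1, such that for all x ∈ ℝ: P(S ≤ x) = Σ_{(k_1,k_2)} λ_{k_1,k_2} · [ ((k_2 − dp)/(k_2 − k_1)) H_{k_1}(x) + ((dp − k_1)/(k_2 − k_1)) H_{k_2}(x) ] + (if dp ∈ ℤ) λ_{dp} · H_{dp}(x). -/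
open MeasureTheory ProbabilityTheory


lemma joint_law {Ω : Type*} [MeasurableSpace Ω] (μ : Measure Ω) [IsProbabilityMeasure μ]
    {ι : Type*} [Fintype ι] (f : ι → Ω → ℝ) (hm : ∀ i, Measurable (f i))
    (h : iIndepFun f μ) :
    μ.map (fun ω i => f i ω) = Measure.pi (fun i => μ.map (f i)) := by
  haveI : ∀ i, IsProbabilityMeasure (μ.map (f i)) :=
    fun i => Measure.isProbabilityMeasure_map (hm i).aemeasurable
  refine (Measure.pi_eq (fun s hs => ?_)).symm
  rw [Measure.map_apply (measurable_pi_lambda _ hm) (MeasurableSet.univ_pi hs)]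
  have hset : (fun ω i => f i ω) ⁻¹' Set.pi Set.univ s = ⋂ i, f i ⁻¹' s i := by
    ext ω; simp [Set.mem_pi]
  rw [hset, h.meas_iInter (fun i => ⟨s i, hs i, rfl⟩)]
  exact Finset.prod_congr rfl fun i _ => (Measure.map_apply (hm i) (hs i)).symm

lemma exists_perm (d k : ℕ) (i : Fin d → Bool)
    (hk : (Finset.univ.filter (fun j => i j = true)).card = k) :
    ∃ e : Fin d ≃ Fin d, ∀ j, i (e j) = decide ((j : ℕ) < k) := by
  classical
  have hcard : (Finset.univ.filter (fun j : Fin d => (j : ℕ) < k)).card =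
      (Finset.univ.filter (fun j : Fin d => i j = true)).card := by
    rw [hk]
    have hkd : k ≤ d := by
      calc k = _ := hk.symm
        _ ≤ Finset.univ.card := Finset.card_filter_le _ _
        _ = d := by simp
    rcases lt_or_eq_of_le hkd with h | h
    · have : (Finset.univ.filter (fun j : Fin d => (j : ℕ) < k)) = Finset.Iio ⟨k, h⟩ := by
        ext j; simp [Fin.lt_def]
      rw [this, Fin.card_Iio]
    · have : (Finset.univ.filter (fun j : Fin d => (j : ℕ) < k)) = Finset.univ := by
        ext j; simpa using h ▸ j.isLt
      rw [this]; simp [h]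
  have e1 : {x : Fin d // (x : ℕ) < k} ≃ {x : Fin d // i x = true} := by
    have := Finset.equivOfCardEq hcard
    exact ((Equiv.subtypeEquivRight (fun x => by simp)).symm.trans this).trans
      (Equiv.subtypeEquivRight (fun x => by simp))
  have e2 : {x : Fin d // ¬ (x : ℕ) < k} ≃ {x : Fin d // ¬ i x = true} := by
    have hc2 : (Finset.univ.filter (fun j : Fin d => ¬ (j : ℕ) < k)).card =
        (Finset.univ.filter (fun j : Fin d => ¬ i j = true)).card := by
      have h1 := Finset.card_filter_add_card_filter_not
        (s := (Finset.univ : Finset (Fin d))) (p := fun j : Fin d => (j : ℕ) < k)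
      have h2 := Finset.card_filter_add_card_filter_not
        (s := (Finset.univ : Finset (Fin d))) (p := fun j : Fin d => i j = true)
      omega
    have := Finset.equivOfCardEq hc2
    exact ((Equiv.subtypeEquivRight (fun x => by simp)).symm.trans this).trans
      (Equiv.subtypeEquivRight (fun x => by simp))
  refine ⟨Equiv.subtypeCongr e1 e2, fun j => ?_⟩
  by_cases hj : (j : ℕ) < k
  · have : i ((Equiv.subtypeCongr e1 e2) j) = true := by
      have hrw : (Equiv.subtypeCongr e1 e2) j = ↑(e1 ⟨j, hj⟩) := by
        simp only [Equiv.subtypeCongr, Equiv.trans_apply]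
        rw [Equiv.sumCompl_symm_apply_of_pos (p := fun x : Fin d => (x : ℕ) < k) hj]
        rfl
      rw [hrw]; exact (e1 ⟨j, hj⟩).2
    simp [this, hj]
  · have : ¬ i ((Equiv.subtypeCongr e1 e2) j) = true := by
      have hrw : (Equiv.subtypeCongr e1 e2) j = ↑(e2 ⟨j, hj⟩) := by
        simp only [Equiv.subtypeCongr, Equiv.trans_apply]
        rw [Equiv.sumCompl_symm_apply_of_neg (p := fun x : Fin d => (x : ℕ) < k) hj]
        rfl
      rw [hrw]; exact (e2 ⟨j, hj⟩).2
    simp only [Bool.not_eq_true] at this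
    simp [this, hj]


lemma pmf_decomp (d : ℕ) (r : ℝ) (w : ℕ → ℝ) (hw : ∀ k, 0 ≤ w k)
    (hsum : ∑ k ∈ Finset.range (d+1), w k = 1)
    (hmean : ∑ k ∈ Finset.range (d+1), (k : ℝ) * w k = r)
    (H : ℕ → ℝ → ℝ) :
    ∃ (lam : ℕ × ℕ → ℝ) (lam0 : ℝ),
      (∀ q, 0 ≤ lam q) ∧ 0 ≤ lam0 ∧
      ((¬ ∃ n : ℕ, (n : ℝ) = r) → lam0 = 0) ∧
      ((∑ q ∈ (Finset.range (d + 1) ×ˢ Finset.range (d + 1)).filter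
          (fun q => (q.1 : ℝ) < r ∧ r < (q.2 : ℝ)), lam q) + lam0 = 1) ∧
      (∀ x : ℝ,
        (∑ k ∈ Finset.range (d+1), w k * H k x) =
          (∑ q ∈ (Finset.range (d + 1) ×ˢ Finset.range (d + 1)).filter
              (fun q => (q.1 : ℝ) < r ∧ r < (q.2 : ℝ)),
            lam q * ((((q.2 : ℝ) - r) / ((q.2 : ℝ) - (q.1 : ℝ))) * H q.1 x
                      + ((r - (q.1 : ℝ)) / ((q.2 : ℝ) - (q.1 : ℝ))) * H q.2 x))
          + lam0 * H ⌊r⌋₊ x) := by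
  classical
  set R := Finset.range (d+1) with hR
  set K1 := R.filter (fun k : ℕ => (k : ℝ) < r) with hK1
  set K2 := R.filter (fun k : ℕ => r < (k : ℝ)) with hK2
  set Keq := R.filter (fun k : ℕ => ¬ (k : ℝ) < r ∧ ¬ r < (k : ℝ)) with hKeq
  have hsplit : ∀ g : ℕ → ℝ,
      ∑ k ∈ R, g k = (∑ k ∈ K1, g k) + (∑ k ∈ K2, g k) + (∑ k ∈ Keq, g k) := by
    intro g
    rw [← Finset.sum_filter_add_sum_filter_not R (fun k : ℕ => (k : ℝ) < r) g]
    rw [← Finset.sum_filter_add_sum_filter_not (R.filter (fun k : ℕ => ¬ (k : ℝ) < r))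
      (fun k : ℕ => r < (k : ℝ)) g]
    rw [Finset.filter_filter, Finset.filter_filter]
    have h2 : R.filter (fun k : ℕ => ¬ (k : ℝ) < r ∧ r < (k : ℝ)) = K2 := by
      ext k
      simp only [Finset.mem_filter, hK2]
      constructor
      · rintro ⟨h1, _, h3⟩; exact ⟨h1, h3⟩
      · rintro ⟨h1, h3⟩; exact ⟨h1, not_lt.mpr (le_of_lt h3), h3⟩
    rw [h2]; ring
  have hKeqr : ∀ k ∈ Keq, (k : ℝ) = r := by
    intro k hk
    rw [hKeq, Finset.mem_filter] at hk
    exact le_antisymm (not_lt.mp hk.2.2) (not_lt.mp hk.2.1)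
  have hKeq_single : ∀ g : ℕ → ℝ,
      ∑ k ∈ Keq, w k * g k = (∑ k ∈ Keq, w k) * g ⌊r⌋₊ := by
    intro g
    rcases Finset.eq_empty_or_nonempty Keq with h | ⟨k0, hk0⟩
    · simp [h]
    · have hk0r : (k0 : ℝ) = r := hKeqr k0 hk0
      have hfl : ⌊r⌋₊ = k0 := by rw [← hk0r, Nat.floor_natCast]
      have hKeq_eq : Keq = {k0} := by
        ext k
        simp only [Finset.mem_singleton]
        constructor
        · intro hk
          exact_mod_cast ((hKeqr k hk).trans hk0r.symm)
        · intro hk; subst hk; exact hk0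
      rw [hKeq_eq, hfl]; simp
  -- A = B
  have h0 : ∑ k ∈ R, w k * (r - (k : ℝ)) = 0 := by
    have : ∑ k ∈ R, w k * (r - (k : ℝ))
        = r * (∑ k ∈ R, w k) - ∑ k ∈ R, (k : ℝ) * w k := by
      rw [Finset.mul_sum, ← Finset.sum_sub_distrib]
      exact Finset.sum_congr rfl fun k _ => by ring
    rw [this, hsum, hmean]; ring
  have hAB : (∑ k ∈ K1, w k * (r - (k : ℝ))) = ∑ k ∈ K2, w k * ((k : ℝ) - r) := by
    have h1 := hsplit (fun k => w k * (r - (k : ℝ)))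
    rw [h0] at h1
    have h2 : ∑ k ∈ Keq, w k * (r - (k : ℝ)) = 0 :=
      Finset.sum_eq_zero fun k hk => by rw [hKeqr k hk]; ring
    have h3 : ∑ k ∈ K2, w k * (r - (k : ℝ)) = - ∑ k ∈ K2, w k * ((k : ℝ) - r) := by
      rw [← Finset.sum_neg_distrib]
      exact Finset.sum_congr rfl fun k _ => by ring
    rw [h2, h3] at h1
    linarith
  set A := ∑ k ∈ K1, w k * (r - (k : ℝ)) with hA_def
  have hA_nonneg : 0 ≤ A := Finset.sum_nonneg fun k hk => by
    rw [hK1, Finset.mem_filter] at hk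
    have := hk.2
    exact mul_nonneg (hw k) (by linarith)
  have hfp : (R ×ˢ R).filter (fun q => (q.1 : ℝ) < r ∧ r < (q.2 : ℝ)) = K1 ×ˢ K2 := by
    ext q
    simp only [Finset.mem_filter, Finset.mem_product, hK1, hK2]
    tauto
  by_cases hA : A = 0
  · -- degenerate case: all mass at r
    have hBzero : ∑ k ∈ K2, w k * ((k : ℝ) - r) = 0 := by rw [← hAB]; exact hA
    have hK1zero : ∀ k ∈ K1, w k = 0 := by
      intro k hk
      have hpos : (k : ℝ) < r := (Finset.mem_filter.mp hk).2
      have := (Finset.sum_eq_zero_iff_of_nonneg (fun k hk => by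
        have : (k : ℝ) < r := (Finset.mem_filter.mp hk).2
        exact mul_nonneg (hw k) (by linarith))).mp hA k hk
      have h2 : r - (k : ℝ) ≠ 0 := by intro h; simp at this ⊢; linarith
      exact (mul_eq_zero.mp this).resolve_right h2
    have hK2zero : ∀ k ∈ K2, w k = 0 := by
      intro k hk
      have hpos : r < (k : ℝ) := (Finset.mem_filter.mp hk).2
      have := (Finset.sum_eq_zero_iff_of_nonneg (fun k hk => by
        have : r < (k : ℝ) := (Finset.mem_filter.mp hk).2
        exact mul_nonneg (hw k) (by linarith))).mp hBzero k hk
      have h2 : (k : ℝ) - r ≠ 0 := by intro h; linarith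
      exact (mul_eq_zero.mp this).resolve_right h2
    have hSE : (∑ k ∈ Keq, w k) = 1 := by
      have h1 := hsplit w
      rw [hsum, Finset.sum_eq_zero hK1zero, Finset.sum_eq_zero hK2zero] at h1
      linarith
    have hne : Keq.Nonempty := by
      by_contra h
      rw [Finset.not_nonempty_iff_eq_empty] at h
      rw [h] at hSE; simp at hSE
    obtain ⟨k0, hk0⟩ := hne
    refine ⟨fun _ => 0, 1, fun q => le_refl 0, zero_le_one,
      fun h => absurd ⟨k0, hKeqr k0 hk0⟩ h, by simp, fun x => ?_⟩
    have hlhs := hsplit (fun k => w k * H k x)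
    have z1 : ∑ k ∈ K1, w k * H k x = 0 :=
      Finset.sum_eq_zero (fun k hk => by rw [hK1zero k hk]; ring)
    have z2 : ∑ k ∈ K2, w k * H k x = 0 :=
      Finset.sum_eq_zero (fun k hk => by rw [hK2zero k hk]; ring)
    rw [z1, z2, hKeq_single (fun k => H k x), hSE] at hlhs
    simpa using hlhs
  · have hApos : 0 < A := lt_of_le_of_ne hA_nonneg (Ne.symm hA)
    set S2 := ∑ k ∈ K2, w k with hS2
    set lam : ℕ × ℕ → ℝ := fun q =>
      if (q.1 : ℝ) < r ∧ r < (q.2 : ℝ) then w q.1 * w q.2 * (((q.2 : ℝ) - (q.1 : ℝ)) / A)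
      else 0 with hlam
    refine ⟨lam, ∑ k ∈ Keq, w k, ?_, Finset.sum_nonneg fun k _ => hw k, ?_, ?_, ?_⟩
    · intro q
      simp only [hlam]
      split_ifs with h
      · have : (0:ℝ) ≤ (q.2 : ℝ) - (q.1 : ℝ) := by
          obtain ⟨h1, h2⟩ := h; linarith
        exact mul_nonneg (mul_nonneg (hw _) (hw _)) (div_nonneg this hA_nonneg)
      · exact le_refl 0
    · intro h
      exact Finset.sum_eq_zero fun k hk => absurd ⟨k, hKeqr k hk⟩ h
    · -- total mass
      rw [hfp, Finset.sum_product]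
      have hinner : ∀ k1 ∈ K1, ∑ k2 ∈ K2, lam (k1, k2)
          = w k1 * (∑ k2 ∈ K2, w k2 * ((k2 : ℝ) - r)) / A
            + (w k1 * (r - (k1 : ℝ))) * S2 / A := by
        intro k1 hk1
        have hk1r : (k1 : ℝ) < r := (Finset.mem_filter.mp hk1).2
        rw [Finset.mul_sum, Finset.mul_sum, Finset.sum_div, Finset.sum_div,
          ← Finset.sum_add_distrib]
        refine Finset.sum_congr rfl fun k2 hk2 => ?_
        have hk2r : r < (k2 : ℝ) := (Finset.mem_filter.mp hk2).2
        simp only [hlam]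
        rw [if_pos (And.intro hk1r hk2r)]
        field_simp
        ring
      rw [Finset.sum_congr rfl hinner, ← hAB]
      rw [Finset.sum_add_distrib]
      have e1 : ∑ k1 ∈ K1, w k1 * A / A = ∑ k1 ∈ K1, w k1 :=
        Finset.sum_congr rfl fun k1 _ => by field_simp
      have e2 : ∑ k1 ∈ K1, (w k1 * (r - (k1 : ℝ))) * S2 / A = S2 := by
        rw [← Finset.sum_div, ← Finset.sum_mul, ← hA_def]
        field_simp
      rw [e1, e2]
      have h1 := hsplit w
      rw [hsum, ← hS2] at h1
      linarith
    · intro x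
      rw [hfp, Finset.sum_product]
      have hterm : ∀ k1 ∈ K1, ∀ k2 ∈ K2,
          lam (k1, k2) * ((((k2 : ℝ) - r) / ((k2 : ℝ) - (k1 : ℝ))) * H k1 x
            + ((r - (k1 : ℝ)) / ((k2 : ℝ) - (k1 : ℝ))) * H k2 x)
          = (w k1 * H k1 x) * (w k2 * ((k2 : ℝ) - r)) / A
            + (w k2 * H k2 x) * (w k1 * (r - (k1 : ℝ))) / A := by
        intro k1 hk1 k2 hk2
        have hk1r : (k1 : ℝ) < r := (Finset.mem_filter.mp hk1).2
        have hk2r : r < (k2 : ℝ) := (Finset.mem_filter.mp hk2).2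
        have hne : (k2 : ℝ) - (k1 : ℝ) ≠ 0 := by intro h; linarith
        simp only [hlam]
        rw [if_pos (And.intro hk1r hk2r)]
        field_simp
      have hsum_eq : ∑ k1 ∈ K1, ∑ k2 ∈ K2, lam (k1, k2)
            * ((((k2 : ℝ) - r) / ((k2 : ℝ) - (k1 : ℝ))) * H k1 x
              + ((r - (k1 : ℝ)) / ((k2 : ℝ) - (k1 : ℝ))) * H k2 x)
          = (∑ k1 ∈ K1, w k1 * H k1 x) + ∑ k2 ∈ K2, w k2 * H k2 x := by
        have step1 : ∀ k1 ∈ K1, ∑ k2 ∈ K2, lam (k1, k2)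
            * ((((k2 : ℝ) - r) / ((k2 : ℝ) - (k1 : ℝ))) * H k1 x
              + ((r - (k1 : ℝ)) / ((k2 : ℝ) - (k1 : ℝ))) * H k2 x)
            = (w k1 * H k1 x) * A / A
              + ∑ k2 ∈ K2, (w k2 * H k2 x) * (w k1 * (r - (k1 : ℝ))) / A := by
          intro k1 hk1
          rw [Finset.sum_congr rfl (hterm k1 hk1), Finset.sum_add_distrib]
          congr 1
          rw [← Finset.sum_div, ← Finset.mul_sum, ← hAB]
        rw [Finset.sum_congr rfl step1, Finset.sum_add_distrib]
        congr 1
        · exact Finset.sum_congr rfl fun k1 _ => by field_simp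
        · rw [Finset.sum_comm]
          have : ∀ k2 ∈ K2, ∑ k1 ∈ K1, (w k2 * H k2 x) * (w k1 * (r - (k1 : ℝ))) / A
              = w k2 * H k2 x := by
            intro k2 _
            rw [← Finset.sum_div, ← Finset.mul_sum, ← hA_def]
            field_simp
          rw [Finset.sum_congr rfl this]
      rw [hsum_eq, ← hKeq_single (fun k => H k x)]
      have := hsplit (fun k => w k * H k x)
      linarith

lemma count_law {Ω : Type*} [MeasurableSpace Ω] (μ : Measure Ω) [IsProbabilityMeasure μ]
    (d : ℕ) (μ₀ μ₁ : Measure ℝ) [IsProbabilityMeasure μ₀] [IsProbabilityMeasure μ₁]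
    (Z : Bool × Fin d → Ω → ℝ) (hZm : ∀ i, Measurable (Z i))
    (hZindep : iIndepFun Z μ)
    (hZ0 : ∀ j, Measure.map (Z (false, j)) μ = μ₀)
    (hZ1 : ∀ j, Measure.map (Z (true, j)) μ = μ₁)
    (i : Fin d → Bool) (x : ℝ) (k : ℕ)
    (hk : (Finset.univ.filter (fun j => i j = true)).card = k) :
    μ {ω | (∑ j, Z (i j, j) ω) ≤ x} =
    μ {ω | (∑ j ∈ Finset.univ.filter (fun j : Fin d => (j : ℕ) < k), Z (true, j) ω)
         + (∑ j ∈ Finset.univ.filter (fun j : Fin d => k ≤ (j : ℕ)), Z (false, j) ω) ≤ x} := by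
  classical
  obtain ⟨e, he⟩ := exists_perm d k i hk
  set ν : Bool × Fin d → Measure ℝ := fun b => if b.1 = true then μ₁ else μ₀ with hν
  haveI : ∀ b, IsProbabilityMeasure (ν b) := by
    intro b; rw [hν]; dsimp only; split_ifs <;> infer_instance
  have hmap : ∀ b, μ.map (Z b) = ν b := by
    rintro ⟨c, j⟩
    cases c
    · simpa [hν] using hZ0 j
    · simpa [hν] using hZ1 j
  have hZvecm : Measurable (fun ω => fun b : Bool × Fin d => Z b ω) :=
    measurable_pi_lambda _ hZm
  have hjoint : μ.map (fun ω => fun b : Bool × Fin d => Z b ω) = Measure.pi ν := by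
    rw [joint_law μ Z hZm hZindep]
    congr 1
    funext b
    exact hmap b
  -- events as preimages
  have hAmeas : ∀ (a : Fin d → Bool),
      MeasurableSet {y : Bool × Fin d → ℝ | (∑ j, y (a j, j)) ≤ x} := by
    intro a
    have hm : Measurable (fun y : Bool × Fin d → ℝ => ∑ j, y (a j, j)) :=
      Finset.measurable_sum Finset.univ
        (fun j _ => measurable_pi_apply ((a j, j) : Bool × Fin d))
    exact measurableSet_le hm measurable_const
  have hev : ∀ (a : Fin d → Bool),
      μ {ω | (∑ j, Z (a j, j) ω) ≤ x}
        = Measure.pi ν {y : Bool × Fin d → ℝ | (∑ j, y (a j, j)) ≤ x} := by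
    intro a
    rw [← hjoint, Measure.map_apply hZvecm (hAmeas a)]
    rfl
  -- rewrite standard event
  have hsplitsum : ∀ g : Bool × Fin d → ℝ,
      (∑ j ∈ Finset.univ.filter (fun j : Fin d => (j : ℕ) < k), g (true, j))
        + (∑ j ∈ Finset.univ.filter (fun j : Fin d => k ≤ (j : ℕ)), g (false, j))
      = ∑ j : Fin d, g (decide ((j : ℕ) < k), j) := by
    intro g
    rw [← Finset.sum_filter_add_sum_filter_not Finset.univ (fun j : Fin d => (j : ℕ) < k)
      (fun j => g (decide ((j : ℕ) < k), j))]
    congr 1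
    · refine Finset.sum_congr rfl fun j hj => ?_
      have := (Finset.mem_filter.mp hj).2
      simp [this]
    · have hset : (Finset.univ.filter (fun j : Fin d => k ≤ (j : ℕ)))
          = Finset.univ.filter (fun j : Fin d => ¬ (j : ℕ) < k) := by
        ext j; simp [not_lt]
      rw [hset]
      refine Finset.sum_congr rfl fun j hj => ?_
      have := (Finset.mem_filter.mp hj).2
      simp [this]
  have hstdev : {ω | (∑ j ∈ Finset.univ.filter (fun j : Fin d => (j : ℕ) < k), Z (true, j) ω)
         + (∑ j ∈ Finset.univ.filter (fun j : Fin d => k ≤ (j : ℕ)), Z (false, j) ω) ≤ x}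
      = {ω | (∑ j, Z ((fun j : Fin d => decide ((j : ℕ) < k)) j, j) ω) ≤ x} := by
    ext ω
    simp only [Set.mem_setOf_eq]
    rw [hsplitsum (fun b => Z b ω)]
  rw [hstdev, hev i, hev (fun j : Fin d => decide ((j : ℕ) < k))]
  -- permutation invariance
  set σ : (Bool × Fin d) ≃ (Bool × Fin d) := (Equiv.refl Bool).prodCongr e with hσ
  have hνσ : (fun b => ν (σ b)) = ν := by
    funext b; cases b; rfl
  have hmp : MeasurePreserving (MeasurableEquiv.piCongrLeft (fun _ : Bool × Fin d => ℝ) σ)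
      (Measure.pi ν) (Measure.pi ν) := by
    have h := measurePreserving_piCongrLeft (α := fun _ : Bool × Fin d => ℝ) ν σ
    rwa [hνσ] at h
  have hkey := hmp.measure_preimage (hAmeas i).nullMeasurableSet
  have hpre : (MeasurableEquiv.piCongrLeft (fun _ : Bool × Fin d => ℝ) σ) ⁻¹'
        {y : Bool × Fin d → ℝ | (∑ j, y (i j, j)) ≤ x}
      = {y : Bool × Fin d → ℝ | (∑ j, y ((fun j : Fin d => decide ((j : ℕ) < k)) j, j)) ≤ x} := by
    ext y
    simp only [Set.mem_preimage, Set.mem_setOf_eq]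
    have hsum : (∑ j, (MeasurableEquiv.piCongrLeft (fun _ : Bool × Fin d => ℝ) σ) y (i j, j))
        = ∑ j : Fin d, y (decide ((j : ℕ) < k), j) := by
      rw [← Equiv.sum_comp e (fun j => (MeasurableEquiv.piCongrLeft
        (fun _ : Bool × Fin d => ℝ) σ) y (i j, j))]
      refine Finset.sum_congr rfl fun j _ => ?_
      have h1 : ((i (e j), e j) : Bool × Fin d) = σ (decide ((j : ℕ) < k), j) := by
        rw [hσ]
        simp [Equiv.prodCongr, he j]
      rw [h1]
      rw [MeasurableEquiv.coe_piCongrLeft]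
      exact Equiv.piCongrLeft_apply_apply (fun _ : Bool × Fin d => ℝ) σ y _
    rw [hsum]
  rw [hpre] at hkey
  exact hkey.symm

/-- the cdf of `S = Σ_j Z_{I_j,j}` (identical margins, GFGM(p)
dependence) is a convex combination of the cdfs associated with the extremal
two-point pmfs on `{0,…,d}` with mean `dp` (and the point mass at `dp` when `dp`
is an integer), where `H_k(x) = P(Σ_{j≤k} Z_{1,j} + Σ_{j>k} Z_{0,j} ≤ x)`. -/
theorem gfgm_sum_cdf_polytope_decomposition
    {Ω : Type*} [MeasurableSpace Ω] (μ : Measure Ω) [IsProbabilityMeasure μ]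
    (d : ℕ) (hd : 1 ≤ d) (p : ℝ) (hp : p ∈ Set.Ioo (0 : ℝ) 1)
    (I : Ω → Fin d → Bool) (hIm : Measurable I)
    (hIp : ∀ j, μ {ω | I ω j = true} = ENNReal.ofReal p)
    (μ₀ μ₁ : Measure ℝ) [IsProbabilityMeasure μ₀] [IsProbabilityMeasure μ₁]
    (Z : Bool × Fin d → Ω → ℝ) (hZm : ∀ i, Measurable (Z i))
    (hZindep : iIndepFun Z μ)
    (hZ0 : ∀ j, Measure.map (Z (false, j)) μ = μ₀)
    (hZ1 : ∀ j, Measure.map (Z (true, j)) μ = μ₁)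
    (hZI : IndepFun (fun ω => fun i => Z i ω) I μ)
    (H : ℕ → ℝ → ℝ)
    (hH : ∀ k x, H k x =
      (μ {ω | (∑ j ∈ Finset.univ.filter (fun j : Fin d => (j : ℕ) < k), Z (true, j) ω)
              + (∑ j ∈ Finset.univ.filter (fun j : Fin d => k ≤ (j : ℕ)), Z (false, j) ω)
              ≤ x}).toReal) :
    ∃ (lam : ℕ × ℕ → ℝ) (lam0 : ℝ),
      (∀ q, 0 ≤ lam q) ∧ 0 ≤ lam0 ∧
      ((¬ ∃ n : ℕ, (n : ℝ) = (d : ℝ) * p) → lam0 = 0) ∧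
      ((∑ q ∈ (Finset.range (d + 1) ×ˢ Finset.range (d + 1)).filter
          (fun q => (q.1 : ℝ) < (d : ℝ) * p ∧ (d : ℝ) * p < (q.2 : ℝ)), lam q)
        + lam0 = 1) ∧
      (∀ x : ℝ,
        (μ {ω | (∑ j, Z (I ω j, j) ω) ≤ x}).toReal =
          (∑ q ∈ (Finset.range (d + 1) ×ˢ Finset.range (d + 1)).filter
              (fun q => (q.1 : ℝ) < (d : ℝ) * p ∧ (d : ℝ) * p < (q.2 : ℝ)),
            lam q * ((((q.2 : ℝ) - (d : ℝ) * p) / ((q.2 : ℝ) - (q.1 : ℝ))) * H q.1 x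
                      + (((d : ℝ) * p - (q.1 : ℝ)) / ((q.2 : ℝ) - (q.1 : ℝ))) * H q.2 x))
          + lam0 * H ⌊(d : ℝ) * p⌋₊ x) := by
  classical
  set k : (Fin d → Bool) → ℕ := fun i => (Finset.univ.filter (fun j => i j = true)).card with hkdef
  set W : (Fin d → Bool) → ℝ := fun i => (μ {ω | I ω = i}).toReal with hWdef
  set w : ℕ → ℝ := fun m => ∑ i ∈ Finset.univ.filter (fun i : Fin d → Bool => k i = m), W i
    with hwdef
  have hk_le : ∀ i : Fin d → Bool, k i ≤ d := by
    intro i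
    calc k i ≤ Finset.univ.card := Finset.card_filter_le _ _
      _ = d := by simp
  have hk_mem : ∀ i : Fin d → Bool, i ∈ (Finset.univ : Finset (Fin d → Bool)) →
      k i ∈ Finset.range (d+1) := fun i _ => Finset.mem_range.mpr (Nat.lt_succ_of_le (hk_le i))
  have hImeas : ∀ i : Fin d → Bool, MeasurableSet {ω | I ω = i} := by
    intro i
    have : {ω | I ω = i} = I ⁻¹' {i} := rfl
    rw [this]
    exact hIm (measurableSet_singleton i)
  -- event measurability
  have hsumZmeas : ∀ (a : Fin d → Bool) (x : ℝ),
      MeasurableSet {ω | (∑ j, Z (a j, j) ω) ≤ x} := by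
    intro a x
    have hm : Measurable (fun ω => ∑ j, Z (a j, j) ω) :=
      Finset.measurable_sum Finset.univ (fun j _ => hZm (a j, j))
    exact measurableSet_le hm measurable_const
  -- W sums to 1
  have hpartition : ∀ (s : Finset (Fin d → Bool)),
      μ (⋃ i ∈ s, {ω | I ω = i}) = ∑ i ∈ s, μ {ω | I ω = i} := by
    intro s
    refine measure_biUnion_finset ?_ (fun i _ => hImeas i)
    intro a _ b _ hab
    refine Set.disjoint_left.mpr ?_
    intro ω h1 h2
    exact hab ((show I ω = _ from h1).symm.trans (show I ω = _ from h2))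
  have hWsum : ∑ i : Fin d → Bool, W i = 1 := by
    have h1 := hpartition Finset.univ
    have h2 : (⋃ i ∈ (Finset.univ : Finset (Fin d → Bool)), {ω | I ω = i}) = Set.univ := by
      ext ω
      simp only [Set.mem_iUnion, Set.mem_setOf_eq, Set.mem_univ, iff_true]
      exact ⟨I ω, Finset.mem_univ _, rfl⟩
    rw [h2, measure_univ] at h1
    rw [hWdef]
    rw [← ENNReal.toReal_sum (fun i _ => measure_ne_top μ _), ← h1]
    simp
  -- margin
  have hp_eq : ∀ j : Fin d,
      ∑ i ∈ Finset.univ.filter (fun i : Fin d → Bool => i j = true), W i = p := by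
    intro j
    have h2 : {ω | I ω j = true}
        = ⋃ i ∈ Finset.univ.filter (fun i : Fin d → Bool => i j = true), {ω | I ω = i} := by
      ext ω
      simp only [Set.mem_iUnion, Set.mem_setOf_eq, Finset.mem_filter, Finset.mem_univ, true_and]
      constructor
      · intro h; exact ⟨I ω, h, rfl⟩
      · rintro ⟨i, hij, hIi⟩; rw [hIi]; exact hij
    have h1 := hpartition (Finset.univ.filter (fun i : Fin d → Bool => i j = true))
    rw [← h2, hIp j] at h1
    rw [hWdef]
    rw [← ENNReal.toReal_sum (fun i _ => measure_ne_top μ _), ← h1,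
      ENNReal.toReal_ofReal hp.1.le]
  -- mean
  have hswap : ∑ i : Fin d → Bool, (k i : ℝ) * W i = (d : ℝ) * p := by
    have h1 : ∀ i : Fin d → Bool, (k i : ℝ) * W i
        = ∑ j : Fin d, (if i j = true then W i else 0) := by
      intro i
      rw [← Finset.sum_filter, Finset.sum_const, nsmul_eq_mul, hkdef]
    rw [Finset.sum_congr rfl (fun i _ => h1 i), Finset.sum_comm]
    have h2 : ∀ j : Fin d, ∑ i : Fin d → Bool, (if i j = true then W i else 0) = p := by
      intro j
      rw [← Finset.sum_filter]
      exact hp_eq j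
    rw [Finset.sum_congr rfl (fun j _ => h2 j), Finset.sum_const]
    simp [mul_comm]
  have hmean : ∑ m ∈ Finset.range (d+1), (m : ℝ) * w m = (d : ℝ) * p := by
    rw [← hswap, hwdef]
    rw [← Finset.sum_fiberwise_of_maps_to hk_mem (fun i => (k i : ℝ) * W i)]
    refine Finset.sum_congr rfl fun m _ => ?_
    rw [Finset.mul_sum]
    refine Finset.sum_congr rfl fun i hi => ?_
    rw [(Finset.mem_filter.mp hi).2]
  have hsum1 : ∑ m ∈ Finset.range (d+1), w m = 1 := by
    rw [hwdef, Finset.sum_fiberwise_of_maps_to hk_mem W, hWsum]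
  have hwnn : ∀ m, 0 ≤ w m :=
    fun m => Finset.sum_nonneg fun i _ => ENNReal.toReal_nonneg
  -- cdf decomposition over configurations
  have hcdf : ∀ x : ℝ, (μ {ω | (∑ j, Z (I ω j, j) ω) ≤ x}).toReal
      = ∑ m ∈ Finset.range (d+1), w m * H m x := by
    intro x
    have hEdec : {ω | (∑ j, Z (I ω j, j) ω) ≤ x}
        = ⋃ i ∈ (Finset.univ : Finset (Fin d → Bool)),
            ({ω | I ω = i} ∩ {ω | (∑ j, Z (i j, j) ω) ≤ x}) := by
      ext ω
      simp only [Set.mem_setOf_eq, Set.mem_iUnion, Set.mem_inter_iff, Finset.mem_univ,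
        exists_true_left]
      constructor
      · intro h
        exact ⟨I ω, rfl, h⟩
      · rintro ⟨i, hIi, hs⟩
        rw [hIi]
        exact hs
    have hmeasE : μ {ω | (∑ j, Z (I ω j, j) ω) ≤ x}
        = ∑ i : Fin d → Bool, μ {ω | I ω = i} * μ {ω | (∑ j, Z (i j, j) ω) ≤ x} := by
      rw [hEdec, measure_biUnion_finset]
      · refine Finset.sum_congr rfl fun i _ => ?_
        have hsets : {ω | I ω = i} ∩ {ω | (∑ j, Z (i j, j) ω) ≤ x}
            = (fun ω => fun b : Bool × Fin d => Z b ω) ⁻¹'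
                {y : Bool × Fin d → ℝ | (∑ j, y (i j, j)) ≤ x} ∩ I ⁻¹' {i} := by
          rw [Set.inter_comm]; rfl
        rw [hsets, hZI.measure_inter_preimage_eq_mul _ _ ?_ (measurableSet_singleton i)]
        · rw [mul_comm]; rfl
        · have hm : Measurable (fun y : Bool × Fin d → ℝ => ∑ j, y (i j, j)) :=
            Finset.measurable_sum Finset.univ
              (fun j _ => measurable_pi_apply ((i j, j) : Bool × Fin d))
          exact measurableSet_le hm measurable_const
      · intro a _ b _ hab
        refine Set.disjoint_left.mpr ?_
        rintro ω ⟨h1, _⟩ ⟨h2, _⟩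
        exact hab ((show I ω = _ from h1).symm.trans (show I ω = _ from h2))
      · exact fun i _ => (hImeas i).inter (hsumZmeas i x)
    have hWH : ∀ i : Fin d → Bool,
        (μ {ω | I ω = i} * μ {ω | (∑ j, Z (i j, j) ω) ≤ x}).toReal = W i * H (k i) x := by
      intro i
      rw [ENNReal.toReal_mul, hWdef]
      congr 1
      rw [count_law μ d μ₀ μ₁ Z hZm hZindep hZ0 hZ1 i x (k i) rfl, hH (k i) x]
    rw [hmeasE, ENNReal.toReal_sum (fun i _ => ENNReal.mul_ne_top (measure_ne_top μ _)
      (measure_ne_top μ _))]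
    rw [Finset.sum_congr rfl (fun i _ => hWH i),
      ← Finset.sum_fiberwise_of_maps_to hk_mem (fun i => W i * H (k i) x)]
    refine Finset.sum_congr rfl fun m _ => ?_
    rw [hwdef]
    dsimp only
    rw [Finset.sum_mul]
    refine Finset.sum_congr rfl fun i hi => ?_
    rw [(Finset.mem_filter.mp hi).2]
  obtain ⟨lam, lam0, h1, h2, h3, h4, h5⟩ :=
    pmf_decomp d ((d : ℝ) * p) w hwnn hsum1 hmean H
  exact ⟨lam, lam0, h1, h2, h3, h4, fun x => by rw [hcdf x, h5 x]⟩
end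

section
/- Let λ > 0 and p ∈ (0,1). Let W_1 be exponentially distributed with rate λ/(1−p) (mean (1−p)/λ), W_2 exponentially distributed with rate λ (mean 1/λ), and I Bernoulli with P(I = 1) = p, with W_1, W_2, I mutually independent. Then W_1 + I·W_2 is exponentially distributed with rate λ. -/
open MeasureTheory ProbabilityTheory Real Set

lemma expMeasure_Iic' {c : ℝ} (hc : 0 < c) (t : ℝ) :
    expMeasure c (Iic t) = ENNReal.ofReal (if 0 ≤ t then 1 - rexp (-(c * t)) else 0) := by
  rw [expMeasure, gammaMeasure, withDensity_apply _ measurableSet_Iic]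
  exact lintegral_exponentialPDF_eq_antiDeriv hc t

lemma integral_exp_mul' {c : ℝ} (hc : c ≠ 0) (t : ℝ) :
    ∫ x in (0:ℝ)..t, rexp (c * x) = (rexp (c * t) - 1) / c := by
  rw [intervalIntegral.integral_comp_mul_left rexp hc]
  simp [integral_exp, div_eq_inv_mul]

lemma alg_aux {a r E2 E3 : ℝ} (ha : a ≠ 0) (h1 : r - a ≠ 0) :
    a * ((E2 * E3 - 1) / -a) - a * E2 * ((E3 - 1) / (r - a))
      = 1 - E2 * E3 - a / (a - r) * (E2 - E2 * E3) := by
  have h2 : a - r ≠ 0 := by intro h; apply h1; linarith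
  have h3 : (E3 - 1) / (r - a) = (1 - E3) / (a - r) := by
    rw [← neg_div_neg_eq, neg_sub, neg_sub]
  rw [h3, div_neg, mul_neg, ← mul_div_assoc, mul_div_cancel_left₀ _ ha]
  have h4 : a * E2 * ((1 - E3) / (a - r)) = a / (a - r) * (E2 - E2 * E3) := by
    field_simp
  rw [h4]; ring

lemma map_restrict_factor {Ω : Type*} [MeasurableSpace Ω] (μ : Measure Ω)
    {f : Ω → ℝ × ℝ} {I : Ω → Bool} (hf : Measurable f)
    (hInd : IndepFun f I μ) {g : ℝ × ℝ → ℝ} (hg : Measurable g) (b : Bool) :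
    Measure.map (g ∘ f) (μ.restrict (I ⁻¹' {b})) = μ (I ⁻¹' {b}) • Measure.map (g ∘ f) μ := by
  ext s hs
  rw [Measure.map_apply (hg.comp hf) hs, Measure.restrict_apply ((hg.comp hf) hs),
    Measure.smul_apply, Measure.map_apply (hg.comp hf) hs, smul_eq_mul,
    show (g ∘ f) ⁻¹' s = f ⁻¹' (g ⁻¹' s) from rfl,
    hInd.measure_inter_preimage_eq_mul _ _ (hg hs) (by trivial), mul_comm]

/-- if `W₁ ∼ Exp(r/(1-p))`, `W₂ ∼ Exp(r)` and `I ∼ Bernoulli(p)` are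
mutually independent, then `W₁ + I·W₂ ∼ Exp(r)`. -/
theorem exp_plus_bernoulli_exp
    {Ω : Type*} [MeasurableSpace Ω] (μ : Measure Ω) [IsProbabilityMeasure μ]
    (r p : ℝ) (hr : 0 < r) (hp : p ∈ Set.Ioo (0 : ℝ) 1)
    (W1 W2 : Ω → ℝ) (I : Ω → Bool)
    (hW1m : Measurable W1) (hW2m : Measurable W2) (hIm : Measurable I)
    (hW1 : Measure.map W1 μ = expMeasure (r / (1 - p)))
    (hW2 : Measure.map W2 μ = expMeasure r)
    (hIp : μ {ω | I ω = true} = ENNReal.ofReal p)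
    (hW12 : IndepFun W1 W2 μ)
    (hWI : IndepFun (fun ω => (W1 ω, W2 ω)) I μ) :
    Measure.map (fun ω => W1 ω + (if I ω then W2 ω else 0)) μ = expMeasure r := by
  obtain ⟨hp0, hp1⟩ := hp
  have h1p : (0:ℝ) < 1 - p := by linarith
  set a : ℝ := r / (1 - p) with ha_def
  have ha : 0 < a := div_pos hr h1p
  have hab' : a - r = r * p / (1 - p) := by field_simp [ha_def]; rw [ha_def]; linear_combination div_mul_cancel₀ r h1p.ne'
  have hab : 0 < a - r := by rw [hab']; positivity
  have har : r < a := by linarith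
  have hA : MeasurableSet (I ⁻¹' {true}) := hIm (by trivial)
  have hpm : Measurable fun ω => (W1 ω, W2 ω) := hW1m.prodMk hW2m
  have hf : Measurable fun ω => W1 ω + (if I ω then W2 ω else 0) :=
    hW1m.add (Measurable.ite hA hW2m measurable_const)
  have hadd : Measurable fun q : ℝ × ℝ => q.1 + q.2 := measurable_fst.add measurable_snd
  have hcompl : (I ⁻¹' {true})ᶜ = I ⁻¹' {false} := by
    ext ω; simp [Bool.not_eq_true]
  have hμT : μ (I ⁻¹' {true}) = ENNReal.ofReal p := hIp
  have hμF : μ (I ⁻¹' {false}) = ENNReal.ofReal (1 - p) := by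
    rw [← hcompl, measure_compl hA (measure_ne_top μ _), measure_univ, hμT,
      ← ENNReal.ofReal_one, ← ENNReal.ofReal_sub _ hp0.le]
  -- decomposition
  have hdecomp : Measure.map (fun ω => W1 ω + (if I ω then W2 ω else 0)) μ
      = ENNReal.ofReal p • Measure.map (fun ω => W1 ω + W2 ω) μ
        + ENNReal.ofReal (1 - p) • Measure.map W1 μ := by
    have h1 : Measure.map (fun ω => W1 ω + (if I ω then W2 ω else 0)) (μ.restrict (I ⁻¹' {true}))
        = Measure.map (fun ω => W1 ω + W2 ω) (μ.restrict (I ⁻¹' {true})) := by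
      apply Measure.map_congr
      filter_upwards [ae_restrict_mem hA] with ω hω
      simp only [Set.mem_preimage, Set.mem_singleton_iff] at hω
      simp [hω]
    have h2 : Measure.map (fun ω => W1 ω + (if I ω then W2 ω else 0)) (μ.restrict (I ⁻¹' {false}))
        = Measure.map W1 (μ.restrict (I ⁻¹' {false})) := by
      apply Measure.map_congr
      filter_upwards [ae_restrict_mem (hIm (by trivial))] with ω hω
      simp only [Set.mem_preimage, Set.mem_singleton_iff] at hω
      simp [hω]
    have h3 : Measure.map (fun ω => W1 ω + W2 ω) (μ.restrict (I ⁻¹' {true}))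
        = μ (I ⁻¹' {true}) • Measure.map (fun ω => W1 ω + W2 ω) μ :=
      map_restrict_factor μ hpm hWI hadd true
    have h4 : Measure.map W1 (μ.restrict (I ⁻¹' {false}))
        = μ (I ⁻¹' {false}) • Measure.map W1 μ :=
      map_restrict_factor μ hpm hWI (measurable_fst (α := ℝ) (β := ℝ)) false
    calc Measure.map (fun ω => W1 ω + (if I ω then W2 ω else 0)) μ
        = Measure.map (fun ω => W1 ω + (if I ω then W2 ω else 0))
            (μ.restrict (I ⁻¹' {true}) + μ.restrict (I ⁻¹' {true})ᶜ) := by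
          rw [Measure.restrict_add_restrict_compl hA]
      _ = Measure.map (fun ω => W1 ω + (if I ω then W2 ω else 0)) (μ.restrict (I ⁻¹' {true}))
          + Measure.map (fun ω => W1 ω + (if I ω then W2 ω else 0))
              (μ.restrict (I ⁻¹' {false})) := by
          rw [hcompl]; exact Measure.map_add _ _ hf
      _ = ENNReal.ofReal p • Measure.map (fun ω => W1 ω + W2 ω) μ
          + ENNReal.ofReal (1 - p) • Measure.map W1 μ := by
          rw [h1, h2, h3, h4, hμT, hμF]
  -- law of the sum
  haveI : IsProbabilityMeasure (expMeasure r) := isProbabilityMeasure_expMeasure hr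
  haveI : IsProbabilityMeasure (expMeasure a) := isProbabilityMeasure_expMeasure ha
  have hprodlaw : Measure.map (fun ω => (W1 ω, W2 ω)) μ = (expMeasure a).prod (expMeasure r) := by
    rw [← hW1, ← hW2]
    exact (indepFun_iff_map_prod_eq_prod_map_map hW1m.aemeasurable hW2m.aemeasurable).mp hW12
  have hsum : Measure.map (fun ω => W1 ω + W2 ω) μ
      = Measure.map (fun q : ℝ × ℝ => q.1 + q.2) ((expMeasure a).prod (expMeasure r)) := by
    rw [← hprodlaw, Measure.map_map hadd hpm]; rfl
  haveI : IsProbabilityMeasure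
      (Measure.map (fun ω => W1 ω + (if I ω then W2 ω else 0)) μ) :=
    Measure.isProbabilityMeasure_map hf.aemeasurable
  apply MeasureTheory.Measure.ext_of_Iic
  intro t
  rw [hdecomp, hsum, hW1, Measure.add_apply, Measure.smul_apply, Measure.smul_apply,
    smul_eq_mul, smul_eq_mul, expMeasure_Iic' ha, expMeasure_Iic' hr,
    Measure.map_apply hadd measurableSet_Iic]
  -- compute product measure of the half plane
  have hS : ((expMeasure a).prod (expMeasure r)) ((fun q : ℝ × ℝ => q.1 + q.2) ⁻¹' Iic t)
      = ∫⁻ x, exponentialPDF a x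
          * ENNReal.ofReal (if 0 ≤ t - x then 1 - rexp (-(r * (t - x))) else 0) := by
    rw [Measure.prod_apply (hadd measurableSet_Iic)]
    have h1 : ∀ x : ℝ, expMeasure r (Prod.mk x ⁻¹' ((fun q : ℝ × ℝ => q.1 + q.2) ⁻¹' Iic t))
        = ENNReal.ofReal (if 0 ≤ t - x then 1 - rexp (-(r * (t - x))) else 0) := by
      intro x
      rw [show Prod.mk x ⁻¹' ((fun q : ℝ × ℝ => q.1 + q.2) ⁻¹' Iic t) = Iic (t - x) by
        ext y; simp only [mem_preimage, mem_Iic]; constructor <;> intro h <;> linarith]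
      exact expMeasure_Iic' hr _
    have hgm : Measurable (gammaPDF 1 a) := (measurable_gammaPDFReal 1 a).ennreal_ofReal
    have hGm : Measurable fun x : ℝ =>
        ENNReal.ofReal (if 0 ≤ t - x then 1 - rexp (-(r * (t - x))) else 0) := by
      apply Measurable.ennreal_ofReal
      refine Measurable.ite ?_ ?_ measurable_const
      · exact measurableSet_le measurable_const (measurable_const.sub measurable_id)
      · exact measurable_const.sub (((measurable_const.sub measurable_id).const_mul r).neg.exp)
    rw [lintegral_congr h1, expMeasure, gammaMeasure,
      lintegral_withDensity_eq_lintegral_mul _ hgm hGm]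
    rfl
  rw [hS]
  by_cases ht : 0 ≤ t
  · rw [if_pos ht, if_pos ht]
    set φ : ℝ → ℝ := fun x => a * rexp (-(a * x)) * (1 - rexp (-(r * (t - x)))) with hφ_def
    have hφnn : ∀ x ∈ Icc 0 t, 0 ≤ φ x := by
      intro x hx
      have h1 : rexp (-(r * (t - x))) ≤ 1 := by
        rw [exp_le_one_iff]
        have : 0 ≤ t - x := by linarith [hx.2]
        nlinarith
      have h2 := exp_pos (-(a * x))
      simp only [hφ_def]
      exact mul_nonneg (mul_nonneg ha.le h2.le) (by linarith)
    have hind : (fun x => exponentialPDF a x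
          * ENNReal.ofReal (if 0 ≤ t - x then 1 - rexp (-(r * (t - x))) else 0))
        = (Icc 0 t).indicator fun x => ENNReal.ofReal (φ x) := by
      funext x
      by_cases h0 : 0 ≤ x
      · by_cases h1 : x ≤ t
        · rw [Set.indicator_of_mem (show x ∈ Icc 0 t from ⟨h0, h1⟩), exponentialPDF_of_nonneg h0, if_pos (by linarith),
            hφ_def, ← ENNReal.ofReal_mul (by positivity)]
        · rw [indicator_of_notMem (fun hm => h1 hm.2), if_neg (by push_neg at h1; linarith),
            ENNReal.ofReal_zero, mul_zero]
      · rw [indicator_of_notMem (fun hm => h0 hm.1),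
          exponentialPDF_of_neg (lt_of_not_ge h0), zero_mul]
    have hJ : ∫⁻ x, exponentialPDF a x
          * ENNReal.ofReal (if 0 ≤ t - x then 1 - rexp (-(r * (t - x))) else 0)
        = ∫⁻ x in Icc 0 t, ENNReal.ofReal (φ x) := by
      rw [← lintegral_indicator measurableSet_Icc]
      exact lintegral_congr fun x => congrFun hind x
    rw [hJ]
    have hφc : Continuous φ := by
      apply Continuous.mul
      · exact continuous_const.mul ((continuous_const.mul continuous_id).neg.rexp)
      · exact continuous_const.sub ((continuous_const.mul
          (continuous_const.sub continuous_id)).neg.rexp)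
    have hnn : 0 ≤ᵐ[volume.restrict (Icc 0 t)] φ :=
      (ae_restrict_iff' measurableSet_Icc).mpr (ae_of_all _ hφnn)
    rw [← ofReal_integral_eq_lintegral_ofReal hφc.integrableOn_Icc hnn]
    set E2 : ℝ := rexp (-(r * t)) with hE2_def
    set E3 : ℝ := rexp ((r - a) * t) with hE3_def
    have hE1 : rexp (-(a * t)) = E2 * E3 := by
      rw [hE2_def, hE3_def, ← exp_add]; congr 1; ring
    set V : ℝ := ∫ x in Icc 0 t, φ x with hV_def
    have hVnn : 0 ≤ V := setIntegral_nonneg measurableSet_Icc hφnn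
    have hVval : V = (1 - E2 * E3) - a / (a - r) * (E2 - E2 * E3) := by
      rw [hV_def, integral_Icc_eq_integral_Ioc, ← intervalIntegral.integral_of_le ht]
      have hcont1 : Continuous fun x : ℝ => a * rexp (-a * x) :=
        continuous_const.mul ((continuous_const.mul continuous_id).rexp)
      have hcont2 : Continuous fun x : ℝ => a * E2 * rexp ((r - a) * x) :=
        continuous_const.mul ((continuous_const.mul continuous_id).rexp)
      have hφeq : EqOn φ (fun x => a * rexp (-a * x) - a * E2 * rexp ((r - a) * x))
          (uIcc (0:ℝ) t) := by
        intro x _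
        have h2 : rexp (-(a * x)) * rexp (-(r * (t - x))) = E2 * rexp ((r - a) * x) := by
          rw [hE2_def, ← exp_add, ← exp_add]; congr 1; ring
        simp only [hφ_def]
        calc a * rexp (-(a * x)) * (1 - rexp (-(r * (t - x))))
            = a * rexp (-(a * x)) - a * (rexp (-(a * x)) * rexp (-(r * (t - x)))) := by ring
          _ = a * rexp (-a * x) - a * E2 * rexp ((r - a) * x) := by
              rw [h2, show -(a * x) = -a * x by ring]; ring
      rw [intervalIntegral.integral_congr hφeq,
        intervalIntegral.integral_sub (hcont1.intervalIntegrable _ _)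
          (hcont2.intervalIntegrable _ _),
        intervalIntegral.integral_const_mul, intervalIntegral.integral_const_mul,
        integral_exp_mul' (neg_ne_zero.mpr ha.ne') t,
        integral_exp_mul' (sub_ne_zero.mpr (ne_of_lt har)) t]
      rw [show rexp (-a * t) = E2 * E3 by rw [← hE1]; congr 1; ring]
      exact alg_aux ha.ne' (sub_ne_zero.mpr (ne_of_lt har))
    have hE1le : rexp (-(a * t)) ≤ 1 := by
      rw [exp_le_one_iff]; nlinarith
    rw [← ENNReal.ofReal_mul hp0.le, ← ENNReal.ofReal_mul h1p.le,
      ← ENNReal.ofReal_add (mul_nonneg hp0.le hVnn)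
        (mul_nonneg h1p.le (by linarith : (0:ℝ) ≤ 1 - rexp (-(a * t))))]
    have hpq : p * (a / (a - r)) = 1 := by rw [hab', ha_def]; field_simp
    have hkey : p * V + (1 - p) * (1 - rexp (-(a * t))) = 1 - E2 := by
      rw [hVval, hE1]
      linear_combination (E2 * E3 - E2) * hpq
    rw [hkey]
  · rw [if_neg ht, if_neg ht]
    have hz : ∀ x : ℝ, exponentialPDF a x
        * ENNReal.ofReal (if 0 ≤ t - x then 1 - rexp (-(r * (t - x))) else 0) = 0 := by
      intro x
      rcases lt_or_ge x 0 with h | h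
      · rw [exponentialPDF_of_neg h, zero_mul]
      · rw [if_neg (by push_neg at ht; intro hc; linarith), ENNReal.ofReal_zero, mul_zero]
    rw [lintegral_congr hz, lintegral_zero]
    simp
end

section
/- Let d ≥ 1, λ > 0, p ∈ (0,1). Let W_{1,1},…,W_{1,d} be i.i.d. exponential with rate λ/(1−p), W_{2,1},…,W_{2,d} i.i.d. exponential with rate λ, all 2d variables mutually independent and independent of a {0,1}^d-valued random vector I = (I_1,…,I_d). Set S = Σ_{j=1}^d (W_{1,j} + I_j W_{2,j}). Then the law of S equals Σ_{k=0}^d P(Σ_{j=1}^d I_j = k) · (Γ(d, λ/(1−p)) ∗ Γ(k, λ)), where Γ(n, θ) denotes the Gamma (Erlang) distribution with integer shape n and rate θ, ∗ denotes convolution of measures, and the k = 0 term is Γ(d, λ/(1−p)). -/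
open MeasureTheory ProbabilityTheory


open MeasureTheory ProbabilityTheory
open scoped ENNReal

lemma my_map_add_eq_conv {Ω : Type*} [MeasurableSpace Ω] (μ : Measure Ω) [IsProbabilityMeasure μ]
    {X Y : Ω → ℝ} (hX : Measurable X) (hY : Measurable Y) (h : IndepFun X Y μ) :
    μ.map (fun ω => X ω + Y ω) = (μ.map X).conv (μ.map Y) := by
  have hmap := (indepFun_iff_map_prod_eq_prod_map_map hX.aemeasurable hY.aemeasurable).mp h
  rw [Measure.conv, ← hmap, Measure.map_map measurable_add (hX.prodMk hY)]
  rfl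

lemma my_conv_withDensity {f g : ℝ → ℝ≥0∞} (hf : Measurable f) (hg : Measurable g) :
    (volume.withDensity f).conv (volume.withDensity g)
      = volume.withDensity (fun z => ∫⁻ y, f (z - y) * g y) := by
  ext s hs
  have hA : MeasurableSet ((fun p : ℝ × ℝ => p.1 + p.2) ⁻¹' s) := measurable_add hs
  have hsind : Measurable (s.indicator (1 : ℝ → ℝ≥0∞)) := measurable_one.indicator hs
  rw [Measure.conv, Measure.map_apply measurable_add hs, ← lintegral_indicator_one hA]
  have hind : ∀ p : ℝ × ℝ, ((fun p : ℝ × ℝ => p.1 + p.2) ⁻¹' s).indicator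
      (1 : ℝ × ℝ → ℝ≥0∞) p = s.indicator (1 : ℝ → ℝ≥0∞) (p.1 + p.2) := by
    intro p
    by_cases h : p.1 + p.2 ∈ s <;> simp [Set.indicator, h, Set.mem_preimage]
  rw [lintegral_congr hind]
  rw [lintegral_prod_symm (fun p : ℝ × ℝ => s.indicator (1 : ℝ → ℝ≥0∞) (p.1 + p.2))
    (by fun_prop : Measurable fun p : ℝ × ℝ => s.indicator (1 : ℝ → ℝ≥0∞) (p.1 + p.2)).aemeasurable]
  have step1 : ∀ y : ℝ, (∫⁻ x, s.indicator (1 : ℝ → ℝ≥0∞) (x + y) ∂(volume.withDensity f))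
      = ∫⁻ z, f (z - y) * s.indicator (1 : ℝ → ℝ≥0∞) z := by
    intro y
    have hmy : Measurable fun x : ℝ => s.indicator (1 : ℝ → ℝ≥0∞) (x + y) := by fun_prop
    rw [lintegral_withDensity_eq_lintegral_mul _ hf hmy]
    have := lintegral_add_right_eq_self (μ := (volume : Measure ℝ))
      (fun z => f (z - y) * s.indicator (1 : ℝ → ℝ≥0∞) z) y
    rw [← this]
    simp
  calc ∫⁻ y, (∫⁻ x, s.indicator (1 : ℝ → ℝ≥0∞) (x + y) ∂(volume.withDensity f))
        ∂(volume.withDensity g)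
      = ∫⁻ y, g y * ∫⁻ z, f (z - y) * s.indicator (1 : ℝ → ℝ≥0∞) z ∂(volume) := by
        have hmm : Measurable fun y : ℝ =>
            (∫⁻ x, s.indicator (1 : ℝ → ℝ≥0∞) (x + y) ∂(volume.withDensity f)) := by
          simp_rw [step1]
          exact Measurable.lintegral_prod_right
            (f := fun y z => f (z - y) * s.indicator (1 : ℝ → ℝ≥0∞) z) (by fun_prop)
        rw [lintegral_withDensity_eq_lintegral_mul _ hg hmm]
        simp_rw [step1]; rfl
    _ = ∫⁻ y, ∫⁻ z, g y * (f (z - y) * s.indicator (1 : ℝ → ℝ≥0∞) z) := by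
        congr 1; funext y
        rw [lintegral_const_mul _
          (by fun_prop : Measurable fun z : ℝ => f (z - y) * s.indicator (1 : ℝ → ℝ≥0∞) z)]
    _ = ∫⁻ z, ∫⁻ y, g y * (f (z - y) * s.indicator (1 : ℝ → ℝ≥0∞) z) := by
        rw [lintegral_lintegral_swap]
        exact (by fun_prop : Measurable fun p : ℝ × ℝ =>
          g p.1 * (f (p.2 - p.1) * s.indicator (1 : ℝ → ℝ≥0∞) p.2)).aemeasurable
    _ = ∫⁻ z, s.indicator (1 : ℝ → ℝ≥0∞) z * ∫⁻ y, f (z - y) * g y := by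
        congr 1; funext z
        rw [← lintegral_const_mul _
          (by fun_prop : Measurable fun y : ℝ => f (z - y) * g y)]
        congr 1; funext y; ring
    _ = ∫⁻ z in s, ∫⁻ y, f (z - y) * g y := by
        rw [← lintegral_indicator hs]
        congr 1; funext z
        by_cases h : z ∈ s <;> simp [Set.indicator, h]
    _ = volume.withDensity (fun z => ∫⁻ y, f (z - y) * g y) s := by
        rw [withDensity_apply _ hs]

open Real

lemma my_gammaPDF_measurable (a r : ℝ) : Measurable (gammaPDF a r) :=
  (measurable_gammaPDFReal a r).ennreal_ofReal

lemma my_density_step {n : ℕ} (hn : 1 ≤ n) {θ : ℝ} (hθ : 0 < θ) (z : ℝ) :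
    (∫⁻ y, gammaPDF n θ (z - y) * gammaPDF 1 θ y) = gammaPDF (n + 1 : ℕ) θ z := by
  obtain ⟨m, rfl⟩ : ∃ m, n = m + 1 := ⟨n - 1, (Nat.succ_pred_eq_of_pos hn).symm⟩
  rcases lt_or_ge z 0 with hz | hz
  · rw [gammaPDF_of_neg (by exact_mod_cast hz)]
    have : ∀ y : ℝ, gammaPDF (m + 1 : ℕ) θ (z - y) * gammaPDF 1 θ y = 0 := by
      intro y
      rcases lt_or_ge y 0 with hy | hy
      · rw [gammaPDF_of_neg hy, mul_zero]
      · rw [gammaPDF_of_neg (by linarith), zero_mul]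
    simp_rw [this, lintegral_zero]
  · set C : ℝ := θ ^ (m + 1) / (Nat.factorial m) * θ * exp (-(θ * z)) with hC
    have hCpos : 0 < C := by positivity
    have key : ∀ y : ℝ, gammaPDF (m + 1 : ℕ) θ (z - y) * gammaPDF 1 θ y
        = (Set.Icc 0 z).indicator (fun y => ENNReal.ofReal (C * (z - y) ^ m)) y := by
      intro y
      by_cases hy : y ∈ Set.Icc 0 z
      · obtain ⟨hy0, hyz⟩ := hy
        rw [Set.indicator_of_mem (Set.mem_Icc.mpr ⟨hy0, hyz⟩), gammaPDF, gammaPDF,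
          ← ENNReal.ofReal_mul (gammaPDFReal_nonneg (by positivity) hθ _)]
        congr 1
        rw [gammaPDFReal, gammaPDFReal, if_pos (sub_nonneg.mpr hyz), if_pos hy0]
        have h1 : (z - y) ^ ((((m + 1 : ℕ)) : ℝ) - 1 : ℝ) = (z - y) ^ m := by
          rw [show (((m + 1 : ℕ)) : ℝ) - 1 = (m : ℕ) by push_cast; ring, Real.rpow_natCast]
        have h3 : θ ^ (((m + 1 : ℕ)) : ℝ) = θ ^ (m + 1) := Real.rpow_natCast θ (m + 1)
        have h2 : Gamma ((((m + 1 : ℕ)) : ℝ)) = (Nat.factorial m) := by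
          rw [show (((m + 1 : ℕ)) : ℝ) = (m : ℝ) + 1 by push_cast; ring]
          exact Gamma_nat_eq_factorial m
        have h4 : exp (-(θ * (z - y))) * exp (-(θ * y)) = exp (-(θ * z)) := by
          rw [← Real.exp_add]; congr 1; ring
        rw [h1, h2, h3, Real.rpow_one, Real.Gamma_one, sub_self, Real.rpow_zero]
        calc θ ^ (m + 1) / (Nat.factorial m) * (z - y) ^ m * exp (-(θ * (z - y)))
              * (θ / 1 * 1 * exp (-(θ * y)))
            = θ ^ (m + 1) / (Nat.factorial m) * θ * (exp (-(θ * (z - y))) * exp (-(θ * y)))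
              * (z - y) ^ m := by ring
          _ = C * (z - y) ^ m := by rw [h4, hC]
      · rw [Set.indicator_of_notMem hy]
        rw [Set.mem_Icc, not_and_or, not_le, not_le] at hy
        rcases hy with hy | hy
        · rw [gammaPDF_of_neg hy, mul_zero]
        · rw [gammaPDF_of_neg (by linarith : z - y < 0), zero_mul]
    rw [lintegral_congr key, lintegral_indicator measurableSet_Icc]
    have hcont : Continuous fun y : ℝ => C * (z - y) ^ m :=
      continuous_const.mul ((continuous_const.sub continuous_id).pow m)
    have hint : IntegrableOn (fun y : ℝ => C * (z - y) ^ m) (Set.Icc 0 z) :=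
      hcont.integrableOn_Icc
    have hnonneg : 0 ≤ᵐ[volume.restrict (Set.Icc 0 z)] fun y : ℝ => C * (z - y) ^ m := by
      refine (ae_restrict_iff' measurableSet_Icc).mpr (ae_of_all _ fun y hy => ?_)
      exact mul_nonneg hCpos.le (pow_nonneg (sub_nonneg.mpr hy.2) m)
    rw [← MeasureTheory.ofReal_integral_eq_lintegral_ofReal hint hnonneg]
    have hval : ∫ y in Set.Icc 0 z, C * (z - y) ^ m = C * (z ^ (m + 1) / (m + 1)) := by
      rw [integral_const_mul, integral_Icc_eq_integral_Ioc,
        ← intervalIntegral.integral_of_le hz,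
        intervalIntegral.integral_comp_sub_left (fun u => u ^ m) z]
      simp [integral_pow]
    rw [hval, gammaPDF_of_nonneg hz]
    congr 1
    have h5 : θ ^ ((((m + 1 : ℕ) + 1 : ℕ)) : ℝ) = θ ^ (m + 2) := by
      rw [Real.rpow_natCast]
    have h6 : z ^ (((((m + 1 : ℕ) + 1 : ℕ)) : ℝ) - 1) = z ^ (m + 1) := by
      rw [show ((((m + 1 : ℕ) + 1 : ℕ)) : ℝ) - 1 = ((m + 1 : ℕ) : ℝ) by push_cast; ring,
        Real.rpow_natCast]
    have h7 : Gamma ((((m + 1 : ℕ) + 1 : ℕ)) : ℝ) = ((Nat.factorial (m + 1)) : ℝ) := by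
      push_cast
      exact_mod_cast Gamma_nat_eq_factorial (m + 1)
    rw [h5, h6, h7, hC]
    have hfact : ((Nat.factorial (m + 1)) : ℝ) = (m + 1) * (Nat.factorial m) := by
      rw [Nat.factorial_succ]; push_cast; ring
    have hm1 : ((m : ℝ) + 1) ≠ 0 := by positivity
    have hmf : ((Nat.factorial m) : ℝ) ≠ 0 := by positivity
    rw [hfact]
    field_simp
    ring

lemma my_gamma_conv_exp' {n : ℕ} (hn : 1 ≤ n) {θ : ℝ} (hθ : 0 < θ) :
    (gammaMeasure n θ).conv (expMeasure θ) = gammaMeasure (n + 1 : ℕ) θ := by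
  rw [expMeasure, gammaMeasure, gammaMeasure, gammaMeasure,
    my_conv_withDensity (my_gammaPDF_measurable _ _) (my_gammaPDF_measurable _ _)]
  congr 1
  funext z
  exact my_density_step hn hθ z

lemma my_map_sum_exp {Ω ι : Type*} [MeasurableSpace Ω] (μ : Measure Ω) [IsProbabilityMeasure μ]
    {θ : ℝ} (hθ : 0 < θ) (X : ι → Ω → ℝ) (hXm : ∀ i, Measurable (X i))
    (hX : iIndepFun X μ)
    (t : Finset ι) (ht : t.Nonempty) (hlaw : ∀ i ∈ t, μ.map (X i) = expMeasure θ) :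
    μ.map (fun ω => ∑ j ∈ t, X j ω) = gammaMeasure t.card θ := by
  classical
  revert hlaw
  induction ht using Finset.Nonempty.cons_induction with
  | singleton a =>
      intro hlaw
      simp only [Finset.sum_singleton, Finset.card_singleton, Nat.cast_one]
      rw [hlaw a (Finset.mem_singleton_self a)]
      rfl
  | cons a s ha hs ih =>
      intro hlaw
      have hlaw' : ∀ i ∈ s, μ.map (X i) = expMeasure θ := fun i hi =>
        hlaw i (Finset.mem_cons_of_mem hi)
      have hmsum : Measurable fun ω => ∑ j ∈ s, X j ω :=
        Finset.measurable_sum s fun i _ => hXm i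
      have hindep : IndepFun (fun ω => ∑ j ∈ s, X j ω) (X a) μ := by
        have := hX.indepFun_finsetSum_of_notMem hXm ha
        convert this using 2
        simp [Finset.sum_apply]
      have hstep : μ.map (fun ω => (∑ j ∈ s, X j ω) + X a ω)
          = ((μ.map fun ω => ∑ j ∈ s, X j ω)).conv (μ.map (X a)) :=
        my_map_add_eq_conv μ hmsum (hXm a) hindep
      have hsum : (fun ω => ∑ j ∈ Finset.cons a s ha, X j ω)
          = fun ω => (∑ j ∈ s, X j ω) + X a ω := by
        funext ω; rw [Finset.sum_cons]; ring
      rw [hsum, hstep, ih hlaw', hlaw a (Finset.mem_cons_self a s)]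
      haveI : IsProbabilityMeasure (gammaMeasure s.card θ) :=
        isProbabilityMeasure_gammaMeasure (by exact_mod_cast hs.card_pos) hθ
      haveI : IsProbabilityMeasure (expMeasure θ) := isProbabilityMeasure_expMeasure hθ
      rw [my_gamma_conv_exp' hs.card_pos hθ]
      congr 1
      simp [Finset.card_cons, Finset.card_insert_of_notMem ha]



/-- the sum `S = Σ_j (W_{1,j} + I_j W_{2,j})` of components of a vector
with `Exp(r)` margins and GFGM(p) copula is a mixed Erlang:
its law is `Σ_{k=0}^d P(Σ I_j = k) • (Γ(d, r/(1-p)) ∗ Γ(k, r))`,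
with the `k = 0` term equal to `Γ(d, r/(1-p))`. -/
theorem gfgm_exponential_sum_mixed_erlang
    {Ω : Type*} [MeasurableSpace Ω] (μ : Measure Ω) [IsProbabilityMeasure μ]
    (d : ℕ) (hd : 1 ≤ d) (r p : ℝ) (hr : 0 < r) (hp : p ∈ Set.Ioo (0 : ℝ) 1)
    -- `W (false, j) = W_{1,j} ∼ Exp(r/(1-p))`, `W (true, j) = W_{2,j} ∼ Exp(r)`
    (W : Bool × Fin d → Ω → ℝ) (hWm : ∀ i, Measurable (W i))
    (hW1 : ∀ j, Measure.map (W (false, j)) μ = expMeasure (r / (1 - p)))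
    (hW2 : ∀ j, Measure.map (W (true, j)) μ = expMeasure r)
    (hWindep : iIndepFun W μ)
    (I : Ω → Fin d → Bool) (hIm : Measurable I)
    (hWI : IndepFun (fun ω => fun i => W i ω) I μ) :
    Measure.map (fun ω => ∑ j, (W (false, j) ω + if I ω j then W (true, j) ω else 0)) μ
      = ∑ k ∈ Finset.range (d + 1),
          μ {ω | (∑ j, if I ω j then (1 : ℕ) else 0) = k} •
            (if k = 0 then gammaMeasure d (r / (1 - p))
             else Measure.conv (gammaMeasure d (r / (1 - p))) (gammaMeasure k r)) := by
  classical
  set θ1 : ℝ := r / (1 - p) with hθ1def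
  have hθ1 : 0 < θ1 := div_pos hr (by linarith [hp.2])
  -- singletons in `Fin d → Bool` are measurable
  have hsing : ∀ b : Fin d → Bool, MeasurableSet ({b} : Set (Fin d → Bool)) :=
    fun b => measurableSet_singleton b
  -- basic notation
  set cb : (Fin d → Bool) → ℕ := fun b => ∑ j, if b j then 1 else 0 with hcb
  set Sb : (Fin d → Bool) → Ω → ℝ :=
    fun b ω => ∑ j, (W (false, j) ω + if b j then W (true, j) ω else 0) with hSbdef
  set Sf : Finset (Bool × Fin d) := Finset.univ.image (fun j => (false, j)) with hSf
  set Tb : (Fin d → Bool) → Finset (Bool × Fin d) :=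
    fun b => (Finset.univ.filter (fun j => b j = true)).image (fun j => (true, j)) with hTb
  set X : Ω → ℝ := fun ω => ∑ j, W (false, j) ω with hX
  set Y : (Fin d → Bool) → Ω → ℝ :=
    fun b ω => ∑ j ∈ Finset.univ.filter (fun j => b j = true), W (true, j) ω with hY
  have hXeq : ∀ ω, (∑ i ∈ Sf, W i ω) = X ω := by
    intro ω
    rw [hSf, Finset.sum_image (by intro x _ y _ h; exact (Prod.mk.injEq _ _ _ _).mp h |>.2)]
  have hYeq : ∀ b ω, (∑ i ∈ Tb b, W i ω) = Y b ω := by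
    intro b ω
    rw [hTb, Finset.sum_image (by intro x _ y _ h; exact (Prod.mk.injEq _ _ _ _).mp h |>.2)]
  have hcard : ∀ b, cb b = (Finset.univ.filter (fun j => b j = true)).card := by
    intro b
    rw [hcb]
    simp [Finset.sum_boole]
  -- law of X
  have hXlaw : μ.map X = gammaMeasure d θ1 := by
    have hne : Sf.Nonempty := ⟨(false, ⟨0, hd⟩), Finset.mem_image.mpr ⟨⟨0, hd⟩, Finset.mem_univ _, rfl⟩⟩
    have := my_map_sum_exp μ hθ1 W hWm hWindep Sf hne (fun i hi => by
      obtain ⟨j, _, rfl⟩ := Finset.mem_image.mp hi; exact hW1 j)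
    have hc : Sf.card = d := by
      rw [hSf, Finset.card_image_of_injective _ (fun x y h => ((Prod.mk.injEq _ _ _ _).mp h).2),
        Finset.card_univ, Fintype.card_fin]
    rw [← hc]
    rw [← this]
    congr 1
    funext ω
    exact (hXeq ω).symm
  -- law of Y b for nonempty filter
  have hYlaw : ∀ b : Fin d → Bool, (Finset.univ.filter (fun j => b j = true)).Nonempty →
      μ.map (Y b) = gammaMeasure (cb b) r := by
    intro b hne
    have hne' : (Tb b).Nonempty := by
      obtain ⟨j, hj⟩ := hne
      exact ⟨(true, j), Finset.mem_image.mpr ⟨j, hj, rfl⟩⟩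
    have := my_map_sum_exp μ hr W hWm hWindep (Tb b) hne' (fun i hi => by
      obtain ⟨j, _, rfl⟩ := Finset.mem_image.mp hi; exact hW2 j)
    have hc : (Tb b).card = cb b := by
      rw [hTb, Finset.card_image_of_injective _ (fun x y h => ((Prod.mk.injEq _ _ _ _).mp h).2),
        hcard]
    rw [← hc, ← this]
    congr 1
    funext ω
    exact (hYeq b ω).symm
  -- independence of X and Y b
  have hXY : ∀ b : Fin d → Bool, IndepFun X (Y b) μ := by
    intro b
    have hdisj : Disjoint Sf (Tb b) := by
      rw [Finset.disjoint_left]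
      rintro ⟨c, j⟩ hc1 hc2
      rw [hSf, Finset.mem_image] at hc1
      rw [hTb, Finset.mem_image] at hc2
      obtain ⟨j1, _, h1⟩ := hc1
      obtain ⟨j2, _, h2⟩ := hc2
      rw [← h2] at h1
      exact absurd ((Prod.mk.injEq _ _ _ _).mp h1).1 (by simp)
    have hbase := hWindep.indepFun_finset Sf (Tb b) hdisj hWm
    have hφ1 : Measurable fun v : (i : ↥Sf) → ℝ => ∑ i, v i :=
      Finset.measurable_sum Finset.univ fun i _ => measurable_pi_apply i
    have hφ2 : Measurable fun v : (i : ↥(Tb b)) → ℝ => ∑ i, v i :=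
      Finset.measurable_sum Finset.univ fun i _ => measurable_pi_apply i
    have := hbase.comp hφ1 hφ2
    have e1 : ((fun v : (i : ↥Sf) → ℝ => ∑ i, v i) ∘ fun a (i : ↥Sf) => W i a) = X := by
      funext a
      simp only [Function.comp_apply]
      rw [Finset.sum_coe_sort Sf (fun i => W i a)]
      exact hXeq a
    have e2 : ((fun v : (i : ↥(Tb b)) → ℝ => ∑ i, v i) ∘ fun a (i : ↥(Tb b)) => W i a) = Y b := by
      funext a
      simp only [Function.comp_apply]
      rw [Finset.sum_coe_sort (Tb b) (fun i => W i a)]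
      exact hYeq b a
    rwa [e1, e2] at this
  -- measurability
  have hIj : ∀ j, Measurable fun ω => I ω j := fun j => (measurable_pi_apply j).comp hIm
  have hXm' : Measurable X := Finset.measurable_sum _ fun j _ => hWm (false, j)
  have hYm' : ∀ b, Measurable (Y b) := fun b => Finset.measurable_sum _ fun j _ => hWm (true, j)
  have hSbm : ∀ b, Measurable (Sb b) := by
    intro b
    apply Finset.measurable_sum
    intro j _
    apply (hWm (false, j)).add
    by_cases hbj : b j = true
    · simp only [hbj, if_true]; exact hWm (true, j)
    · simp only [hbj, if_false]; exact measurable_const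
  have hSm : Measurable (fun ω => ∑ j, (W (false, j) ω + if I ω j then W (true, j) ω else 0)) := by
    apply Finset.measurable_sum
    intro j _
    apply (hWm (false, j)).add
    exact Measurable.ite ((hIj j) (measurableSet_singleton true)) (hWm (true, j)) measurable_const
  -- law of Sb b
  have hSbLaw : ∀ b, μ.map (Sb b) = if cb b = 0 then gammaMeasure d θ1
      else (gammaMeasure d θ1).conv (gammaMeasure (cb b) r) := by
    intro b
    by_cases h0 : cb b = 0
    · rw [if_pos h0]
      have hfe : (Finset.univ.filter (fun j => b j = true)) = ∅ := by
        rw [← Finset.card_eq_zero, ← hcard]; exact h0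
      have heq : Sb b = X := by
        funext ω
        rw [hSbdef]
        simp only
        rw [Finset.sum_add_distrib]
        have h2 : (∑ j, if b j then W (true, j) ω else 0) = 0 := by
          rw [← Finset.sum_filter, hfe, Finset.sum_empty]
        rw [h2, add_zero, hX]
      rw [heq, hXlaw]
    · rw [if_neg h0]
      have hne : (Finset.univ.filter (fun j => b j = true)).Nonempty :=
        Finset.card_pos.mp (by rw [← hcard]; exact Nat.pos_of_ne_zero h0)
      have hse : Sb b = fun ω => X ω + Y b ω := by
        funext ω
        rw [hSbdef]
        simp only
        rw [Finset.sum_add_distrib]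
        congr 1
        rw [hY]
        exact (Finset.sum_filter _ _).symm
      rw [hse, my_map_add_eq_conv μ hXm' (hYm' b) (hXY b), hXlaw, hYlaw b hne]
  -- independence of Sb b and I
  have hSbI : ∀ b, IndepFun (Sb b) I μ := by
    intro b
    have hφ : Measurable fun v : Bool × Fin d → ℝ =>
        ∑ j, (v (false, j) + if b j then v (true, j) else 0) := by
      apply Finset.measurable_sum
      intro j _
      apply (measurable_pi_apply ((false, j) : Bool × Fin d)).add
      by_cases hbj : b j = true
      · simp only [hbj, if_true]; exact measurable_pi_apply _
      · simp only [hbj, if_false]; exact measurable_const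
    have := hWI.comp hφ measurable_id
    exact this
  -- partition
  refine Measure.ext fun s hs => ?_
  rw [Measure.map_apply hSm hs]
  have hpart : (fun ω => ∑ j, (W (false, j) ω + if I ω j then W (true, j) ω else 0)) ⁻¹' s
      = ⋃ b ∈ (Finset.univ : Finset (Fin d → Bool)), ((Sb b) ⁻¹' s ∩ I ⁻¹' {b}) := by
    ext ω
    simp only [Set.mem_preimage, Set.mem_iUnion, Set.mem_inter_iff, Finset.mem_univ,
      Set.mem_singleton_iff, exists_prop, true_and]
    constructor
    · intro h
      exact ⟨I ω, h, rfl⟩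
    · rintro ⟨b, hb, hbI⟩
      rw [← hbI] at hb
      exact hb
  have hdisjI : ∀ (b b' : Fin d → Bool), b ≠ b' → Disjoint (I ⁻¹' {b}) (I ⁻¹' {b'}) := by
    intro b b' hne
    rw [Set.disjoint_left]
    rintro ω h1 h2
    exact hne (h1.symm.trans h2)
  rw [hpart, measure_biUnion_finset ?_ ?_]
  rotate_left
  · intro b _ b' _ hne
    exact Set.disjoint_of_subset Set.inter_subset_right Set.inter_subset_right (hdisjI b b' hne)
  · intro b _
    exact ((hSbm b) hs).inter (hIm (hsing b))
  have hterm : ∀ b, μ ((Sb b) ⁻¹' s ∩ I ⁻¹' {b}) = (μ.map (Sb b)) s * μ (I ⁻¹' {b}) := by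
    intro b
    rw [(hSbI b).measure_inter_preimage_eq_mul s {b} hs (hsing b),
      Measure.map_apply (hSbm b) hs]
  rw [Finset.sum_congr rfl (fun b _ => hterm b)]
  -- now handle the RHS
  have hR : ∀ k, μ {ω | (∑ j, if I ω j then (1 : ℕ) else 0) = k}
      = ∑ b ∈ Finset.univ.filter (fun b => cb b = k), μ (I ⁻¹' {b}) := by
    intro k
    have hset : {ω | (∑ j, if I ω j then (1 : ℕ) else 0) = k}
        = ⋃ b ∈ Finset.univ.filter (fun b => cb b = k), I ⁻¹' {b} := by
      ext ω
      simp only [Set.mem_setOf_eq, Set.mem_iUnion, Finset.mem_filter, Finset.mem_univ, true_and,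
        Set.mem_preimage, Set.mem_singleton_iff, exists_prop]
      constructor
      · intro h
        exact ⟨I ω, h, rfl⟩
      · rintro ⟨b, hbk, hbI⟩
        rw [← hbI] at hbk
        exact hbk
    rw [hset, measure_biUnion_finset ?_ ?_]
    · intro b _ b' _ hne
      exact hdisjI b b' hne
    · intro b _
      exact hIm (hsing b)
  rw [Measure.finset_sum_apply]
  simp_rw [Measure.smul_apply, smul_eq_mul, hR, Finset.sum_mul]
  rw [← Finset.sum_fiberwise_of_maps_to (g := cb) (t := Finset.range (d + 1)) ?_
    (fun b => (μ.map (Sb b)) s * μ (I ⁻¹' {b}))]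
  rotate_left
  · intro b _
    rw [Finset.mem_range, Nat.lt_succ_iff, hcard]
    exact (Finset.card_filter_le _ _).trans (by simp)
  refine Finset.sum_congr rfl fun k _ => ?_
  refine Finset.sum_congr rfl fun b hb => ?_
  have hbk : cb b = k := (Finset.mem_filter.mp hb).2
  rw [hSbLaw b, hbk, mul_comm]
end

section
/- Let λ_1, λ_2 > 0 and p_1, p_2 ∈ (0,1). Let W_{1,1}, W_{1,2}, W_{2,1}, W_{2,2} be mutually independent with W_{1,j} exponentially distributed with rate λ_j/(1−p_j) and W_{2,j} exponentially distributed with rate λ_j (j = 1, 2), independent of a {0,1}^2-valued random vector (I_1, I_2) with P(I_j = 1) = p_j. Set X_j = W_{1,j} + I_j W_{2,j}. Then Cov(X_1, X_2) = Cov(I_1, I_2)/(λ_1 λ_2), Var(X_j) = 1/λ_j^2 for j = 1, 2, and hence the Pearson correlation coefficient satisfies ρ_P(X_1, X_2) = Cov(X_1, X_2)/√(Var(X_1) Var(X_2)) = Cov(I_1, I_2). -/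
open MeasureTheory ProbabilityTheory

section
open scoped ENNReal NNReal
open Real Set
namespace GFGMAux

lemma exp_pdf_eq (r : ℝ) (x : ℝ) :
    gammaPDFReal 1 r x = if 0 ≤ x then r * Real.exp (-(r * x)) else 0 := by
  unfold gammaPDFReal
  split_ifs with h
  · rw [Real.rpow_one, Real.Gamma_one]
    norm_num
  · rfl

lemma exp_moment_integrable_aux (r : ℝ) (hr : 0 < r) (n : ℕ) :
    IntegrableOn (fun x => r * Real.exp (-(r * x)) * x ^ n) (Ioi 0) := by
  have h := integrableOn_rpow_mul_exp_neg_mul_rpow (p := 1) (s := n) (b := r)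
    (neg_one_lt_zero.trans_le (Nat.cast_nonneg n)) zero_lt_one hr
  have h2 : IntegrableOn (fun x : ℝ => x ^ n * Real.exp (-(r * x))) (Ioi 0) := by
    refine h.congr_fun (fun x hx => ?_) measurableSet_Ioi
    dsimp only
    rw [Real.rpow_natCast, Real.rpow_one, neg_mul]
  exact IntegrableOn.congr_fun (h2.const_mul r) (fun x hx => by ring) measurableSet_Ioi

lemma exp_moment_integral_aux (r : ℝ) (hr : 0 < r) (n : ℕ) :
    ∫ x in Ioi 0, r * Real.exp (-(r * x)) * x ^ n = n.factorial / r ^ n := by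
  have h := Real.integral_rpow_mul_exp_neg_mul_Ioi (a := n + 1) (r := r)
    (by positivity) hr
  have h2 : ∫ x in Ioi (0:ℝ), x ^ n * Real.exp (-(r * x))
      = (1 / r) ^ ((n:ℝ) + 1) * Real.Gamma ((n:ℝ) + 1) := by
    rw [← h]
    refine setIntegral_congr_fun measurableSet_Ioi (fun x hx => ?_)
    rw [add_sub_cancel_right, Real.rpow_natCast]
  calc ∫ x in Ioi 0, r * Real.exp (-(r * x)) * x ^ n
      = r * ∫ x in Ioi (0:ℝ), x ^ n * Real.exp (-(r * x)) := by
        rw [← integral_const_mul]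
        exact setIntegral_congr_fun measurableSet_Ioi (fun x hx => by ring)
    _ = r * ((1 / r) ^ ((n:ℝ) + 1) * Real.Gamma ((n:ℝ) + 1)) := by rw [h2]
    _ = n.factorial / r ^ n := by
        rw [Real.Gamma_nat_eq_factorial,
          show ((n:ℝ) + 1) = ((n + 1 : ℕ) : ℝ) by push_cast; ring, Real.rpow_natCast,
          div_pow, one_pow, pow_succ]
        field_simp

lemma exp_moment (r : ℝ) (hr : 0 < r) (n : ℕ) :
    Integrable (fun x => x ^ n) (expMeasure r) ∧
      ∫ x, x ^ n ∂(expMeasure r) = n.factorial / r ^ n := by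
  have hpm : Measurable fun x => (gammaPDFReal 1 r x).toNNReal :=
    (measurable_gammaPDFReal 1 r).real_toNNReal
  have hme : expMeasure r
      = (volume : Measure ℝ).withDensity (fun x => ((gammaPDFReal 1 r x).toNNReal : ℝ≥0∞)) := by
    rfl
  have hsm : (fun x : ℝ => (gammaPDFReal 1 r x).toNNReal • x ^ n)
      = Set.indicator (Ici 0) (fun x => r * Real.exp (-(r * x)) * x ^ n) := by
    funext x
    by_cases h : 0 ≤ x
    · rw [Set.indicator_of_mem (mem_Ici.mpr h), exp_pdf_eq, if_pos h, NNReal.smul_def,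
        Real.coe_toNNReal _ (by positivity), smul_eq_mul]
    · rw [Set.indicator_of_notMem (fun hx => h (mem_Ici.mp hx)), exp_pdf_eq, if_neg h]
      simp
  have hint : Integrable (fun x : ℝ => (gammaPDFReal 1 r x).toNNReal • x ^ n) volume := by
    rw [hsm, integrable_indicator_iff measurableSet_Ici,
      integrableOn_Ici_iff_integrableOn_Ioi]
    exact exp_moment_integrable_aux r hr n
  constructor
  · rw [hme, integrable_withDensity_iff_integrable_smul hpm]
    exact hint
  · rw [hme, integral_withDensity_eq_integral_smul hpm]
    calc ∫ x : ℝ, (gammaPDFReal 1 r x).toNNReal • x ^ n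
        = ∫ x, Set.indicator (Ici 0) (fun x => r * Real.exp (-(r * x)) * x ^ n) x := by
          rw [hsm]
      _ = ∫ x in Ici (0:ℝ), r * Real.exp (-(r * x)) * x ^ n := by
          rw [integral_indicator measurableSet_Ici]
      _ = ∫ x in Ioi (0:ℝ), r * Real.exp (-(r * x)) * x ^ n := integral_Ici_eq_integral_Ioi
      _ = n.factorial / r ^ n := exp_moment_integral_aux r hr n

variable {Ω : Type*} [MeasurableSpace Ω] {μ : Measure Ω} [IsProbabilityMeasure μ]

lemma exp_moment_comp {W : Ω → ℝ} (hm : Measurable W) {r : ℝ} (hr : 0 < r)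
    (h : Measure.map W μ = expMeasure r) (n : ℕ) :
    Integrable (fun ω => W ω ^ n) μ ∧ ∫ ω, W ω ^ n ∂μ = n.factorial / r ^ n := by
  have hmom := exp_moment r hr n
  have hsm : AEStronglyMeasurable (fun x : ℝ => x ^ n) (Measure.map W μ) := by
    fun_prop
  constructor
  · have := hmom.1
    rw [← h] at this
    exact (integrable_map_measure hsm hm.aemeasurable).mp this
  · have h2 := hmom.2
    rw [← h, integral_map hm.aemeasurable hsm] at h2
    exact h2

end GFGMAux

end
open GFGMAux

/-- for the bivariate GFGM representation with exponential margins,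
`X_j = W_{1,j} + I_j W_{2,j}` with `W_{1,j} ∼ Exp(λ_j/(1-p_j))`, `W_{2,j} ∼ Exp(λ_j)`,
one has `Cov(X₁,X₂) = Cov(I₁,I₂)/(λ₁λ₂)`, `Var(X_j) = 1/λ_j²`, and the Pearson
correlation `ρ_P(X₁,X₂) = Cov(I₁,I₂)`. -/
theorem gfgm_exponential_pearson
    {Ω : Type*} [MeasurableSpace Ω] (μ : Measure Ω) [IsProbabilityMeasure μ]
    (l1 l2 : ℝ) (hl1 : 0 < l1) (hl2 : 0 < l2)
    (p1 p2 : ℝ) (hp1 : p1 ∈ Set.Ioo (0 : ℝ) 1) (hp2 : p2 ∈ Set.Ioo (0 : ℝ) 1)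
    (W11 W12 W21 W22 : Ω → ℝ)
    (hW11m : Measurable W11) (hW12m : Measurable W12)
    (hW21m : Measurable W21) (hW22m : Measurable W22)
    (hW11 : Measure.map W11 μ = expMeasure (l1 / (1 - p1)))
    (hW12 : Measure.map W12 μ = expMeasure (l2 / (1 - p2)))
    (hW21 : Measure.map W21 μ = expMeasure l1)
    (hW22 : Measure.map W22 μ = expMeasure l2)
    (hWindep : iIndepFun ![W11, W12, W21, W22] μ)
    (I1 I2 : Ω → Bool) (hI1m : Measurable I1) (hI2m : Measurable I2)
    (hI1p : μ {ω | I1 ω = true} = ENNReal.ofReal p1)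
    (hI2p : μ {ω | I2 ω = true} = ENNReal.ofReal p2)
    (hWI : IndepFun (fun ω => (W11 ω, W12 ω, W21 ω, W22 ω))
      (fun ω => (I1 ω, I2 ω)) μ) :
    ((∫ ω, (W11 ω + if I1 ω then W21 ω else 0) * (W12 ω + if I2 ω then W22 ω else 0) ∂μ)
        - (∫ ω, (W11 ω + if I1 ω then W21 ω else 0) ∂μ)
          * (∫ ω, (W12 ω + if I2 ω then W22 ω else 0) ∂μ)
      = ((μ {ω | I1 ω = true ∧ I2 ω = true}).toReal - p1 * p2) / (l1 * l2)) ∧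
    ((∫ ω, (W11 ω + if I1 ω then W21 ω else 0) ^ 2 ∂μ)
        - (∫ ω, (W11 ω + if I1 ω then W21 ω else 0) ∂μ) ^ 2 = 1 / l1 ^ 2) ∧
    ((∫ ω, (W12 ω + if I2 ω then W22 ω else 0) ^ 2 ∂μ)
        - (∫ ω, (W12 ω + if I2 ω then W22 ω else 0) ∂μ) ^ 2 = 1 / l2 ^ 2) ∧
    (((∫ ω, (W11 ω + if I1 ω then W21 ω else 0) * (W12 ω + if I2 ω then W22 ω else 0) ∂μ)
        - (∫ ω, (W11 ω + if I1 ω then W21 ω else 0) ∂μ)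
          * (∫ ω, (W12 ω + if I2 ω then W22 ω else 0) ∂μ))
      / Real.sqrt
          (((∫ ω, (W11 ω + if I1 ω then W21 ω else 0) ^ 2 ∂μ)
              - (∫ ω, (W11 ω + if I1 ω then W21 ω else 0) ∂μ) ^ 2)
            * ((∫ ω, (W12 ω + if I2 ω then W22 ω else 0) ^ 2 ∂μ)
              - (∫ ω, (W12 ω + if I2 ω then W22 ω else 0) ∂μ) ^ 2))
      = (μ {ω | I1 ω = true ∧ I2 ω = true}).toReal - p1 * p2) := by
  
  obtain ⟨hp1a, hp1b⟩ := hp1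
  obtain ⟨hp2a, hp2b⟩ := hp2
  have h1p1 : (0:ℝ) < 1 - p1 := by linarith
  have h1p2 : (0:ℝ) < 1 - p2 := by linarith
  have hr1 : 0 < l1 / (1 - p1) := by positivity
  have hr2 : 0 < l2 / (1 - p2) := by positivity
  -- moments of the W's
  have i11 : Integrable W11 μ := by
    simpa using (exp_moment_comp hW11m hr1 hW11 1).1
  have e11 : ∫ ω, W11 ω ∂μ = (1 - p1) / l1 := by
    have h := (exp_moment_comp hW11m hr1 hW11 1).2
    simpa [Nat.factorial, one_div_div] using h
  have i12 : Integrable W12 μ := by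
    simpa using (exp_moment_comp hW12m hr2 hW12 1).1
  have e12 : ∫ ω, W12 ω ∂μ = (1 - p2) / l2 := by
    have h := (exp_moment_comp hW12m hr2 hW12 1).2
    simpa [Nat.factorial, one_div_div] using h
  have i21 : Integrable W21 μ := by
    simpa using (exp_moment_comp hW21m hl1 hW21 1).1
  have e21 : ∫ ω, W21 ω ∂μ = 1 / l1 := by
    have h := (exp_moment_comp hW21m hl1 hW21 1).2
    simpa [Nat.factorial] using h
  have i22 : Integrable W22 μ := by
    simpa using (exp_moment_comp hW22m hl2 hW22 1).1
  have e22 : ∫ ω, W22 ω ∂μ = 1 / l2 := by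
    have h := (exp_moment_comp hW22m hl2 hW22 1).2
    simpa [Nat.factorial] using h
  have i11sq : Integrable (fun ω => W11 ω ^ 2) μ := (exp_moment_comp hW11m hr1 hW11 2).1
  have e11sq : ∫ ω, W11 ω ^ 2 ∂μ = 2 * (1 - p1) ^ 2 / l1 ^ 2 := by
    have h := (exp_moment_comp hW11m hr1 hW11 2).2
    rw [h, div_pow]
    rw [show ((Nat.factorial 2 : ℕ) : ℝ) = 2 by norm_num [Nat.factorial]]
    field_simp
  have i12sq : Integrable (fun ω => W12 ω ^ 2) μ := (exp_moment_comp hW12m hr2 hW12 2).1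
  have e12sq : ∫ ω, W12 ω ^ 2 ∂μ = 2 * (1 - p2) ^ 2 / l2 ^ 2 := by
    have h := (exp_moment_comp hW12m hr2 hW12 2).2
    rw [h, div_pow]
    rw [show ((Nat.factorial 2 : ℕ) : ℝ) = 2 by norm_num [Nat.factorial]]
    field_simp
  have i21sq : Integrable (fun ω => W21 ω ^ 2) μ := (exp_moment_comp hW21m hl1 hW21 2).1
  have e21sq : ∫ ω, W21 ω ^ 2 ∂μ = 2 / l1 ^ 2 := by
    have h := (exp_moment_comp hW21m hl1 hW21 2).2
    rw [h]
    norm_num [Nat.factorial]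
  have i22sq : Integrable (fun ω => W22 ω ^ 2) μ := (exp_moment_comp hW22m hl2 hW22 2).1
  have e22sq : ∫ ω, W22 ω ^ 2 ∂μ = 2 / l2 ^ 2 := by
    have h := (exp_moment_comp hW22m hl2 hW22 2).2
    rw [h]
    norm_num [Nat.factorial]
  -- pairwise independence of the W's
  have hW01 : IndepFun W11 W12 μ := by
    simpa using hWindep.indepFun (show (0 : Fin 4) ≠ 1 by decide)
  have hW02 : IndepFun W11 W21 μ := by
    simpa using hWindep.indepFun (show (0 : Fin 4) ≠ 2 by decide)
  have hW03 : IndepFun W11 W22 μ := by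
    simpa using hWindep.indepFun (show (0 : Fin 4) ≠ 3 by decide)
  have hW21' : IndepFun W21 W12 μ := by
    simpa using hWindep.indepFun (show (2 : Fin 4) ≠ 1 by decide)
  have hW23 : IndepFun W21 W22 μ := by
    simpa using hWindep.indepFun (show (2 : Fin 4) ≠ 3 by decide)
  have hW13 : IndepFun W12 W22 μ := by
    simpa using hWindep.indepFun (show (1 : Fin 4) ≠ 3 by decide)
  -- indicator functions
  have hS1 : MeasurableSet {ω | I1 ω = true} := hI1m (measurableSet_singleton true)
  have hS2 : MeasurableSet {ω | I2 ω = true} := hI2m (measurableSet_singleton true)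
  have hS12 : MeasurableSet {ω | I1 ω = true ∧ I2 ω = true} := by
    have : {ω | I1 ω = true ∧ I2 ω = true}
        = {ω | I1 ω = true} ∩ {ω | I2 ω = true} := rfl
    rw [this]; exact hS1.inter hS2
  have hχ1eq : (fun ω => if I1 ω then (1:ℝ) else 0)
      = Set.indicator {ω | I1 ω = true} (fun _ => (1:ℝ)) := by
    funext ω; by_cases h : I1 ω <;> simp [Set.indicator_apply, h]
  have hχ2eq : (fun ω => if I2 ω then (1:ℝ) else 0)
      = Set.indicator {ω | I2 ω = true} (fun _ => (1:ℝ)) := by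
    funext ω; by_cases h : I2 ω <;> simp [Set.indicator_apply, h]
  have hχ12eq : (fun ω => (if I1 ω then (1:ℝ) else 0) * (if I2 ω then (1:ℝ) else 0))
      = Set.indicator {ω | I1 ω = true ∧ I2 ω = true} (fun _ => (1:ℝ)) := by
    funext ω
    by_cases h1 : I1 ω <;> by_cases h2 : I2 ω <;> simp [Set.indicator_apply, h1, h2]
  have iχ1 : Integrable (fun ω => if I1 ω then (1:ℝ) else 0) μ := by
    rw [hχ1eq]; exact (integrable_const 1).indicator hS1
  have iχ2 : Integrable (fun ω => if I2 ω then (1:ℝ) else 0) μ := by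
    rw [hχ2eq]; exact (integrable_const 1).indicator hS2
  have iχ12 : Integrable (fun ω => (if I1 ω then (1:ℝ) else 0) * (if I2 ω then (1:ℝ) else 0)) μ := by
    rw [hχ12eq]; exact (integrable_const 1).indicator hS12
  have eχ1 : ∫ ω, (if I1 ω then (1:ℝ) else 0) ∂μ = p1 := by
    rw [hχ1eq, integral_indicator_const _ hS1, measureReal_def, hI1p, smul_eq_mul, mul_one,
      ENNReal.toReal_ofReal hp1a.le]
  have eχ2 : ∫ ω, (if I2 ω then (1:ℝ) else 0) ∂μ = p2 := by
    rw [hχ2eq, integral_indicator_const _ hS2, measureReal_def, hI2p, smul_eq_mul, mul_one,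
      ENNReal.toReal_ofReal hp2a.le]
  have eχ12 : ∫ ω, (if I1 ω then (1:ℝ) else 0) * (if I2 ω then (1:ℝ) else 0) ∂μ
      = (μ {ω | I1 ω = true ∧ I2 ω = true}).toReal := by
    rw [hχ12eq, integral_indicator_const _ hS12, smul_eq_mul, mul_one, measureReal_def]
  -- independence of W-functions and I-functions
  have indep_WI : ∀ (F : ℝ × ℝ × ℝ × ℝ → ℝ) (_ : Measurable F) (G : Bool × Bool → ℝ),
      IndepFun (fun ω => F (W11 ω, W12 ω, W21 ω, W22 ω)) (fun ω => G (I1 ω, I2 ω)) μ :=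
    fun F hF G => hWI.comp hF (measurable_of_countable G)
  -- products of two W's
  have iW1112 : Integrable (fun ω => W11 ω * W12 ω) μ := hW01.integrable_mul i11 i12
  have eW1112 : ∫ ω, W11 ω * W12 ω ∂μ = ((1 - p1) / l1) * ((1 - p2) / l2) := by
    refine Eq.trans (hW01.integral_fun_mul_eq_mul_integral i11.1 i12.1) ?_
    rw [e11, e12]
  have iW1121 : Integrable (fun ω => W11 ω * W21 ω) μ := hW02.integrable_mul i11 i21
  have eW1121 : ∫ ω, W11 ω * W21 ω ∂μ = ((1 - p1) / l1) * (1 / l1) := by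
    refine Eq.trans (hW02.integral_fun_mul_eq_mul_integral i11.1 i21.1) ?_
    rw [e11, e21]
  have iW1122 : Integrable (fun ω => W11 ω * W22 ω) μ := hW03.integrable_mul i11 i22
  have eW1122 : ∫ ω, W11 ω * W22 ω ∂μ = ((1 - p1) / l1) * (1 / l2) := by
    refine Eq.trans (hW03.integral_fun_mul_eq_mul_integral i11.1 i22.1) ?_
    rw [e11, e22]
  have iW2112 : Integrable (fun ω => W21 ω * W12 ω) μ := hW21'.integrable_mul i21 i12
  have eW2112 : ∫ ω, W21 ω * W12 ω ∂μ = (1 / l1) * ((1 - p2) / l2) := by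
    refine Eq.trans (hW21'.integral_fun_mul_eq_mul_integral i21.1 i12.1) ?_
    rw [e21, e12]
  have iW2122 : Integrable (fun ω => W21 ω * W22 ω) μ := hW23.integrable_mul i21 i22
  have eW2122 : ∫ ω, W21 ω * W22 ω ∂μ = (1 / l1) * (1 / l2) := by
    refine Eq.trans (hW23.integral_fun_mul_eq_mul_integral i21.1 i22.1) ?_
    rw [e21, e22]
  have iW1222 : Integrable (fun ω => W12 ω * W22 ω) μ := hW13.integrable_mul i12 i22
  have eW1222 : ∫ ω, W12 ω * W22 ω ∂μ = ((1 - p2) / l2) * (1 / l2) := by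
    refine Eq.trans (hW13.integral_fun_mul_eq_mul_integral i12.1 i22.1) ?_
    rw [e12, e22]
  -- independence of W-side products with I-side indicators
  have ind_21_1 : IndepFun W21 (fun ω => if I1 ω then (1:ℝ) else 0) μ :=
    indep_WI (fun p => p.2.2.1) (by fun_prop) (fun p => if p.1 then (1:ℝ) else 0)
  have ind_22_2 : IndepFun W22 (fun ω => if I2 ω then (1:ℝ) else 0) μ :=
    indep_WI (fun p => p.2.2.2) (by fun_prop) (fun p => if p.2 then (1:ℝ) else 0)
  have ind_1121_1 : IndepFun (fun ω => W11 ω * W21 ω) (fun ω => if I1 ω then (1:ℝ) else 0) μ :=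
    indep_WI (fun p => p.1 * p.2.2.1) (by fun_prop) (fun p => if p.1 then (1:ℝ) else 0)
  have ind_21sq_1 : IndepFun (fun ω => W21 ω ^ 2) (fun ω => if I1 ω then (1:ℝ) else 0) μ :=
    indep_WI (fun p => p.2.2.1 ^ 2) (by fun_prop) (fun p => if p.1 then (1:ℝ) else 0)
  have ind_1222_2 : IndepFun (fun ω => W12 ω * W22 ω) (fun ω => if I2 ω then (1:ℝ) else 0) μ :=
    indep_WI (fun p => p.2.1 * p.2.2.2) (by fun_prop) (fun p => if p.2 then (1:ℝ) else 0)
  have ind_22sq_2 : IndepFun (fun ω => W22 ω ^ 2) (fun ω => if I2 ω then (1:ℝ) else 0) μ :=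
    indep_WI (fun p => p.2.2.2 ^ 2) (by fun_prop) (fun p => if p.2 then (1:ℝ) else 0)
  have ind_1122_2 : IndepFun (fun ω => W11 ω * W22 ω) (fun ω => if I2 ω then (1:ℝ) else 0) μ :=
    indep_WI (fun p => p.1 * p.2.2.2) (by fun_prop) (fun p => if p.2 then (1:ℝ) else 0)
  have ind_2112_1 : IndepFun (fun ω => W21 ω * W12 ω) (fun ω => if I1 ω then (1:ℝ) else 0) μ :=
    indep_WI (fun p => p.2.2.1 * p.2.1) (by fun_prop) (fun p => if p.1 then (1:ℝ) else 0)
  have ind_2122_12 : IndepFun (fun ω => W21 ω * W22 ω)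
      (fun ω => (if I1 ω then (1:ℝ) else 0) * (if I2 ω then (1:ℝ) else 0)) μ :=
    indep_WI (fun p => p.2.2.1 * p.2.2.2) (by fun_prop)
      (fun p => (if p.1 then (1:ℝ) else 0) * (if p.2 then (1:ℝ) else 0))
  -- integrability and integrals of mixed terms
  have iT1 : Integrable (fun ω => W21 ω * (if I1 ω then (1:ℝ) else 0)) μ :=
    ind_21_1.integrable_mul i21 iχ1
  have eT1 : ∫ ω, W21 ω * (if I1 ω then (1:ℝ) else 0) ∂μ = (1 / l1) * p1 := by
    refine Eq.trans (ind_21_1.integral_fun_mul_eq_mul_integral i21.1 iχ1.1) ?_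
    rw [e21, eχ1]
  have iT2 : Integrable (fun ω => W22 ω * (if I2 ω then (1:ℝ) else 0)) μ :=
    ind_22_2.integrable_mul i22 iχ2
  have eT2 : ∫ ω, W22 ω * (if I2 ω then (1:ℝ) else 0) ∂μ = (1 / l2) * p2 := by
    refine Eq.trans (ind_22_2.integral_fun_mul_eq_mul_integral i22.1 iχ2.1) ?_
    rw [e22, eχ2]
  have iT3 : Integrable (fun ω => W11 ω * W21 ω * (if I1 ω then (1:ℝ) else 0)) μ :=
    ind_1121_1.integrable_mul iW1121 iχ1
  have eT3 : ∫ ω, W11 ω * W21 ω * (if I1 ω then (1:ℝ) else 0) ∂μ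
      = ((1 - p1) / l1) * (1 / l1) * p1 := by
    refine Eq.trans (ind_1121_1.integral_fun_mul_eq_mul_integral iW1121.1 iχ1.1) ?_
    rw [eW1121, eχ1]
  have iT4 : Integrable (fun ω => W21 ω ^ 2 * (if I1 ω then (1:ℝ) else 0)) μ :=
    ind_21sq_1.integrable_mul i21sq iχ1
  have eT4 : ∫ ω, W21 ω ^ 2 * (if I1 ω then (1:ℝ) else 0) ∂μ = (2 / l1 ^ 2) * p1 := by
    refine Eq.trans (ind_21sq_1.integral_fun_mul_eq_mul_integral i21sq.1 iχ1.1) ?_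
    rw [e21sq, eχ1]
  have iT5 : Integrable (fun ω => W12 ω * W22 ω * (if I2 ω then (1:ℝ) else 0)) μ :=
    ind_1222_2.integrable_mul iW1222 iχ2
  have eT5 : ∫ ω, W12 ω * W22 ω * (if I2 ω then (1:ℝ) else 0) ∂μ
      = ((1 - p2) / l2) * (1 / l2) * p2 := by
    refine Eq.trans (ind_1222_2.integral_fun_mul_eq_mul_integral iW1222.1 iχ2.1) ?_
    rw [eW1222, eχ2]
  have iT6 : Integrable (fun ω => W22 ω ^ 2 * (if I2 ω then (1:ℝ) else 0)) μ :=
    ind_22sq_2.integrable_mul i22sq iχ2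
  have eT6 : ∫ ω, W22 ω ^ 2 * (if I2 ω then (1:ℝ) else 0) ∂μ = (2 / l2 ^ 2) * p2 := by
    refine Eq.trans (ind_22sq_2.integral_fun_mul_eq_mul_integral i22sq.1 iχ2.1) ?_
    rw [e22sq, eχ2]
  have iT7 : Integrable (fun ω => W11 ω * W22 ω * (if I2 ω then (1:ℝ) else 0)) μ :=
    ind_1122_2.integrable_mul iW1122 iχ2
  have eT7 : ∫ ω, W11 ω * W22 ω * (if I2 ω then (1:ℝ) else 0) ∂μ
      = ((1 - p1) / l1) * (1 / l2) * p2 := by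
    refine Eq.trans (ind_1122_2.integral_fun_mul_eq_mul_integral iW1122.1 iχ2.1) ?_
    rw [eW1122, eχ2]
  have iT8 : Integrable (fun ω => W21 ω * W12 ω * (if I1 ω then (1:ℝ) else 0)) μ :=
    ind_2112_1.integrable_mul iW2112 iχ1
  have eT8 : ∫ ω, W21 ω * W12 ω * (if I1 ω then (1:ℝ) else 0) ∂μ
      = (1 / l1) * ((1 - p2) / l2) * p1 := by
    refine Eq.trans (ind_2112_1.integral_fun_mul_eq_mul_integral iW2112.1 iχ1.1) ?_
    rw [eW2112, eχ1]
  have iT9 : Integrable (fun ω =>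
      W21 ω * W22 ω * ((if I1 ω then (1:ℝ) else 0) * (if I2 ω then (1:ℝ) else 0))) μ :=
    ind_2122_12.integrable_mul iW2122 iχ12
  have eT9 : ∫ ω, W21 ω * W22 ω * ((if I1 ω then (1:ℝ) else 0) * (if I2 ω then (1:ℝ) else 0)) ∂μ
      = (1 / l1) * (1 / l2) * (μ {ω | I1 ω = true ∧ I2 ω = true}).toReal := by
    refine Eq.trans (ind_2122_12.integral_fun_mul_eq_mul_integral iW2122.1 iχ12.1) ?_
    rw [eW2122, eχ12]
  -- E[A], E[B]
  have hAfun : (fun ω => W11 ω + if I1 ω then W21 ω else 0)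
      = fun ω => W11 ω + W21 ω * (if I1 ω then (1:ℝ) else 0) := by
    funext ω; by_cases h : I1 ω <;> simp [h]
  have hBfun : (fun ω => W12 ω + if I2 ω then W22 ω else 0)
      = fun ω => W12 ω + W22 ω * (if I2 ω then (1:ℝ) else 0) := by
    funext ω; by_cases h : I2 ω <;> simp [h]
  have EA : ∫ ω, (W11 ω + if I1 ω then W21 ω else 0) ∂μ = 1 / l1 := by
    rw [hAfun, integral_add i11 iT1, e11, eT1]
    field_simp
    ring
  have EB : ∫ ω, (W12 ω + if I2 ω then W22 ω else 0) ∂μ = 1 / l2 := by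
    rw [hBfun, integral_add i12 iT2, e12, eT2]
    field_simp
    ring
  -- E[A^2], E[B^2]
  have hA2fun : (fun ω => (W11 ω + if I1 ω then W21 ω else 0) ^ 2)
      = fun ω => W11 ω ^ 2 + (2 * (W11 ω * W21 ω * (if I1 ω then (1:ℝ) else 0))
          + W21 ω ^ 2 * (if I1 ω then (1:ℝ) else 0)) := by
    funext ω; by_cases h : I1 ω <;> simp [h] <;> ring
  have hB2fun : (fun ω => (W12 ω + if I2 ω then W22 ω else 0) ^ 2)
      = fun ω => W12 ω ^ 2 + (2 * (W12 ω * W22 ω * (if I2 ω then (1:ℝ) else 0))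
          + W22 ω ^ 2 * (if I2 ω then (1:ℝ) else 0)) := by
    funext ω; by_cases h : I2 ω <;> simp [h] <;> ring
  have iA2a : Integrable (fun ω => 2 * (W11 ω * W21 ω * (if I1 ω then (1:ℝ) else 0))) μ := by
    exact iT3.const_mul 2
  have iA2b : Integrable (fun ω => 2 * (W11 ω * W21 ω * (if I1 ω then (1:ℝ) else 0))
      + W21 ω ^ 2 * (if I1 ω then (1:ℝ) else 0)) μ := iA2a.add iT4
  have iB2a : Integrable (fun ω => 2 * (W12 ω * W22 ω * (if I2 ω then (1:ℝ) else 0))) μ := by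
    exact iT5.const_mul 2
  have iB2b : Integrable (fun ω => 2 * (W12 ω * W22 ω * (if I2 ω then (1:ℝ) else 0))
      + W22 ω ^ 2 * (if I2 ω then (1:ℝ) else 0)) μ := iB2a.add iT6
  have EA2 : ∫ ω, (W11 ω + if I1 ω then W21 ω else 0) ^ 2 ∂μ = 2 / l1 ^ 2 := by
    rw [hA2fun, integral_add i11sq iA2b, integral_add iA2a iT4, MeasureTheory.integral_const_mul,
      e11sq, eT3, eT4]
    field_simp
    ring
  have EB2 : ∫ ω, (W12 ω + if I2 ω then W22 ω else 0) ^ 2 ∂μ = 2 / l2 ^ 2 := by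
    rw [hB2fun, integral_add i12sq iB2b, integral_add iB2a iT6, MeasureTheory.integral_const_mul,
      e12sq, eT5, eT6]
    field_simp
    ring
  -- E[AB]
  have hABfun : (fun ω => (W11 ω + if I1 ω then W21 ω else 0)
        * (W12 ω + if I2 ω then W22 ω else 0))
      = fun ω => W11 ω * W12 ω + (W11 ω * W22 ω * (if I2 ω then (1:ℝ) else 0)
          + (W21 ω * W12 ω * (if I1 ω then (1:ℝ) else 0)
            + W21 ω * W22 ω * ((if I1 ω then (1:ℝ) else 0) * (if I2 ω then (1:ℝ) else 0)))) := by
    funext ω; by_cases h1 : I1 ω <;> by_cases h2 : I2 ω <;> simp [h1, h2] <;> ring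
  have iABa : Integrable (fun ω => W21 ω * W12 ω * (if I1 ω then (1:ℝ) else 0)
      + W21 ω * W22 ω * ((if I1 ω then (1:ℝ) else 0) * (if I2 ω then (1:ℝ) else 0))) μ :=
    iT8.add iT9
  have iABb : Integrable (fun ω => W11 ω * W22 ω * (if I2 ω then (1:ℝ) else 0)
      + (W21 ω * W12 ω * (if I1 ω then (1:ℝ) else 0)
        + W21 ω * W22 ω * ((if I1 ω then (1:ℝ) else 0) * (if I2 ω then (1:ℝ) else 0)))) μ :=
    iT7.add iABa
  have EAB : ∫ ω, (W11 ω + if I1 ω then W21 ω else 0)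
        * (W12 ω + if I2 ω then W22 ω else 0) ∂μ
      = ((1 - p1) / l1) * ((1 - p2) / l2) + ((1 - p1) / l1) * (1 / l2) * p2
        + (1 / l1) * ((1 - p2) / l2) * p1
        + (1 / l1) * (1 / l2) * (μ {ω | I1 ω = true ∧ I2 ω = true}).toReal := by
    rw [hABfun, integral_add iW1112 iABb, integral_add iT7 iABa,
      integral_add iT8 iT9, eW1112, eT7, eT8, eT9]
    ring
  -- conclusion
  have hCov : (∫ ω, (W11 ω + if I1 ω then W21 ω else 0)
        * (W12 ω + if I2 ω then W22 ω else 0) ∂μ)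
      - (∫ ω, (W11 ω + if I1 ω then W21 ω else 0) ∂μ)
        * (∫ ω, (W12 ω + if I2 ω then W22 ω else 0) ∂μ)
      = ((μ {ω | I1 ω = true ∧ I2 ω = true}).toReal - p1 * p2) / (l1 * l2) := by
    rw [EAB, EA, EB]
    field_simp
    ring
  have hV1 : (∫ ω, (W11 ω + if I1 ω then W21 ω else 0) ^ 2 ∂μ)
      - (∫ ω, (W11 ω + if I1 ω then W21 ω else 0) ∂μ) ^ 2 = 1 / l1 ^ 2 := by
    rw [EA2, EA]
    field_simp
    ring
  have hV2 : (∫ ω, (W12 ω + if I2 ω then W22 ω else 0) ^ 2 ∂μ)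
      - (∫ ω, (W12 ω + if I2 ω then W22 ω else 0) ∂μ) ^ 2 = 1 / l2 ^ 2 := by
    rw [EB2, EB]
    field_simp
    ring
  refine ⟨hCov, hV1, hV2, ?_⟩
  rw [hCov, hV1, hV2, show (1 / l1 ^ 2) * (1 / l2 ^ 2) = (1 / (l1 * l2)) ^ 2 by ring,
    Real.sqrt_sq (by positivity)]
  field_simp
end
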